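/- arXiv:1812.00041 — 6 statements merged into one kernel-verified Lean document; each statement's English description precedes it below -/
import Mathlib

section
/- Let f(ξ) ∈ ℚ_p[ξ₁,…,ξₙ] be an elliptic polynomial of degree d (i.e. f is homogeneous of degree d and f(ξ)=0 iff ξ=0). Then there exist positive constants C₀ and C₁ such that C₀·‖ξ‖_p^d ≤ |f(ξ)|_p ≤ C₁·‖ξ‖_p^d for every ξ ∈ ℚ_p^n. -/
open MvPolynomial

lemma homog_eval_smul {K : Type*} [Field K] {n d : ℕ}
    (f : MvPolynomial (Fin n) K) (hhom : f.IsHomogeneous d)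
    (c : K) (ξ : Fin n → K) :
    eval (c • ξ) f = c ^ d * eval ξ f := by
  rw [eval_eq, eval_eq, Finset.mul_sum]
  refine Finset.sum_congr rfl fun m hm => ?_
  have hdm : ∑ i ∈ m.support, m i = d := by
    have := hhom (mem_support_iff.mp hm)
    simpa [Finsupp.weight_apply, Finsupp.sum] using this
  rw [← hdm]
  simp only [Pi.smul_apply, smul_eq_mul, mul_pow]
  rw [Finset.prod_mul_distrib, Finset.prod_pow_eq_pow_sum]
  ring

/-- An elliptic polynomial of degree `d` over `ℚ_p` (homogeneous of degree `d`,
vanishing only at `0`) satisfies `C₀‖ξ‖^d ≤ |f(ξ)|_p ≤ C₁‖ξ‖^d`. -/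
theorem elliptic_norm_bounds (p : ℕ) [Fact p.Prime] (n d : ℕ) (hd : 0 < d)
    (f : MvPolynomial (Fin n) ℚ_[p])
    (hhom : f.IsHomogeneous d)
    (hzero : ∀ ξ : Fin n → ℚ_[p], eval ξ f = 0 ↔ ξ = 0) :
    ∃ C₀ C₁ : ℝ, 0 < C₀ ∧ 0 < C₁ ∧ ∀ ξ : Fin n → ℚ_[p],
      C₀ * ‖ξ‖ ^ d ≤ ‖eval ξ f‖ ∧ ‖eval ξ f‖ ≤ C₁ * ‖ξ‖ ^ d := by
  by_cases hn : n = 0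
  · subst hn
    refine ⟨1, 1, one_pos, one_pos, fun ξ => ?_⟩
    have h0 : eval ξ f = 0 := (hzero ξ).mpr (Subsingleton.elim _ _)
    have hξ : ξ = 0 := Subsingleton.elim _ _
    rw [h0, norm_zero, hξ, norm_zero, zero_pow hd.ne', mul_zero]
    exact ⟨le_rfl, le_rfl⟩
  have hne : Nonempty (Fin n) := ⟨⟨0, Nat.pos_of_ne_zero hn⟩⟩
  have hScomp : IsCompact (Metric.sphere (0 : Fin n → ℚ_[p]) 1) := isCompact_sphere 0 1
  have hSne : (Metric.sphere (0 : Fin n → ℚ_[p]) 1).Nonempty := by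
    refine ⟨fun _ => 1, ?_⟩
    rw [mem_sphere_zero_iff_norm]
    exact pi_norm_const (1 : ℚ_[p]) |>.trans norm_one
  have hcont : Continuous fun η : Fin n → ℚ_[p] => ‖eval η f‖ :=
    (MvPolynomial.continuous_eval (p := f)).norm
  obtain ⟨η₀, hη₀, hmin⟩ := hScomp.exists_isMinOn hSne hcont.continuousOn
  obtain ⟨η₁, hη₁, hmax⟩ := hScomp.exists_isMaxOn hSne hcont.continuousOn
  have hη₀norm : ‖η₀‖ = 1 := mem_sphere_zero_iff_norm.mp hη₀
  have hC₀pos : 0 < ‖eval η₀ f‖ := by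
    rw [norm_pos_iff]
    intro h
    have : η₀ = 0 := (hzero η₀).mp h
    rw [this] at hη₀norm; simp at hη₀norm
  refine ⟨‖eval η₀ f‖, ‖eval η₁ f‖, hC₀pos,
    lt_of_lt_of_le hC₀pos (hmax hη₀), fun ξ => ?_⟩
  by_cases hξ : ξ = 0
  · have h0 : eval ξ f = 0 := (hzero ξ).mpr hξ
    rw [h0, norm_zero, hξ, norm_zero, zero_pow hd.ne', mul_zero]
    exact ⟨le_rfl, le_of_eq (mul_zero _).symm⟩
  -- find coordinate of max norm
  have hξpos : 0 < ‖ξ‖ := norm_pos_iff.mpr hξ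
  obtain ⟨i, -, hi⟩ := Finset.exists_mem_eq_sup Finset.univ Finset.univ_nonempty
    (fun i => ‖ξ i‖₊)
  have hci : ‖ξ i‖ = ‖ξ‖ := by
    rw [Pi.norm_def, hi]
    exact (coe_nnnorm _).symm
  have hc0 : ξ i ≠ 0 := by
    intro h
    rw [h, norm_zero] at hci
    exact hξpos.ne hci
  set c := ξ i with hc
  set η := c⁻¹ • ξ with hη
  have hξη : ξ = c • η := by
    rw [hη, smul_smul, mul_inv_cancel₀ hc0, one_smul]
  have hηnorm : ‖η‖ = 1 := by
    rw [hη, norm_smul, norm_inv, hci, inv_mul_cancel₀ hξpos.ne']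
  have hηS : η ∈ Metric.sphere (0 : Fin n → ℚ_[p]) 1 :=
    mem_sphere_zero_iff_norm.mpr hηnorm
  have hev : ‖eval ξ f‖ = ‖ξ‖ ^ d * ‖eval η f‖ := by
    have h2 := homog_eval_smul f hhom c η
    rw [← hξη] at h2
    rw [h2, norm_mul, norm_pow, hci]
  constructor
  · rw [hev, mul_comm (‖eval η₀ f‖)]
    exact mul_le_mul_of_nonneg_left (hmin hηS) (by positivity)
  · rw [hev, mul_comm (‖eval η₁ f‖)]
    exact mul_le_mul_of_nonneg_left (hmax hηS) (by positivity)
end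

section
/- Let f be an elliptic polynomial of degree d over ℚ_p in n variables, β > 0, 1 ≤ ρ < ∞ and t > 0. Then the function ξ ↦ e^{-t·|f(ξ)|_p^β} belongs to L^ρ(ℚ_p^n) with respect to the Haar measure on ℚ_p^n. -/
/-!
Ellipticity and homogeneity give `‖f ξ‖ ≥ C ‖ξ‖ ^ d`, so
`|e^{-t ‖f ξ‖^β}|^ρ ≤ e^{-a ‖ξ‖^γ}` with `a = tρC^β`, `γ = dβ`. To integrate the latter against a
Haar measure, cut space into the shells `‖c‖ ^ k ≤ ‖ξ‖ < ‖c‖ ^ (k + 1)` for a scalar `‖c‖ > 1`.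
Since `ball 0 (‖c‖ ^ k) = c ^ k • ball 0 1`, the Haar measure of the `k`-th ball is `Δ(c) ^ k`
times that of the unit ball, where `Δ` is the distributive Haar character; this geometric growth
is beaten by the doubly exponential decay `e^{-a (‖c‖ ^ γ) ^ k}` of the integrand.
-/

open MeasureTheory MvPolynomial Metric Set
open scoped ENNReal Pointwise

namespace MvPolynomial.IsHomogeneous

variable {𝕜 : Type*} {n d : ℕ}

theorem eval_smul [CommSemiring 𝕜] {f : MvPolynomial (Fin n) 𝕜} (hf : f.IsHomogeneous d)
    (c : 𝕜) (ξ : Fin n → 𝕜) : eval (c • ξ) f = c ^ d * eval ξ f := by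
  rw [eval_eq, eval_eq, Finset.mul_sum]
  refine Finset.sum_congr rfl fun m hm => ?_
  have hdeg : ∑ i ∈ m.support, m i = d := by
    rw [← hf (mem_support_iff.mp hm), Finsupp.weight_apply]
    simp [Finsupp.sum]
  simp only [Pi.smul_apply, smul_eq_mul, mul_pow, Finset.prod_mul_distrib,
    Finset.prod_pow_eq_pow_sum, hdeg]
  ring

/-- Compare with the minimum on the unit sphere, onto which every `ξ ≠ 0` is rescaled
by the inverse of a coordinate of maximal norm. -/
theorem exists_pos_mul_norm_pow_le [NormedField 𝕜] [ProperSpace 𝕜]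
    {f : MvPolynomial (Fin n) 𝕜} (hd : 0 < d) (hf : f.IsHomogeneous d)
    (hzero : ∀ ξ : Fin n → 𝕜, eval ξ f = 0 ↔ ξ = 0) :
    ∃ C > 0, ∀ ξ : Fin n → 𝕜, C * ‖ξ‖ ^ d ≤ ‖eval ξ f‖ := by
  have hpos : ∀ η ∈ sphere (0 : Fin n → 𝕜) 1, 0 < ‖eval η f‖ := fun η hη =>
    norm_pos_iff.mpr fun h => by simp [(hzero η).mp h] at hη
  obtain ⟨C, hC, hmin⟩ := (isCompact_sphere (0 : Fin n → 𝕜) 1).exists_forall_le'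
    (continuous_eval f).norm.continuousOn hpos
  refine ⟨C, hC, fun ξ => ?_⟩
  rcases eq_or_ne ξ 0 with rfl | hξ
  · simp [zero_pow hd.ne']
  have : Nonempty (Fin n) := not_isEmpty_iff.mp fun _ => hξ (Subsingleton.elim _ _)
  obtain ⟨i, hi⟩ := Finite.exists_max fun i => ‖ξ i‖
  have hξi : ‖ξ i‖ = ‖ξ‖ :=
    le_antisymm (norm_le_pi_norm ξ i) ((pi_norm_le_iff_of_nonneg (norm_nonneg _)).mpr hi)
  have hξi0 : ‖ξ i‖ ≠ 0 := hξi ▸ norm_ne_zero_iff.mpr hξ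
  have hsphere : (ξ i)⁻¹ • ξ ∈ sphere (0 : Fin n → 𝕜) 1 := by
    rw [mem_sphere_zero_iff_norm, norm_smul, norm_inv, ← hξi, inv_mul_cancel₀ hξi0]
  calc C * ‖ξ‖ ^ d ≤ ‖eval ((ξ i)⁻¹ • ξ) f‖ * ‖ξ i‖ ^ d := by
        rw [hξi]; gcongr; exact hmin _ hsphere
    _ = ‖eval ξ f‖ := by
        rw [hf.eval_smul, norm_mul, norm_pow, norm_inv, inv_pow, mul_right_comm,
          inv_mul_cancel₀ (pow_ne_zero _ hξi0), one_mul]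

end MvPolynomial.IsHomogeneous

theorem summable_pow_mul_exp_neg_mul_pow {a q R : ℝ} (ha : 0 < a) (hq : 1 < q) (hR : 0 ≤ R) :
    Summable fun k : ℕ => R ^ k * Real.exp (-(a * q ^ k)) := by
  obtain ⟨m, hm⟩ := pow_unbounded_of_one_lt R hq
  have hqm : 0 < q ^ m := by positivity
  have hgeom : Summable fun k : ℕ => (m.factorial / a ^ m) * (R / q ^ m) ^ k :=
    (summable_geometric_of_lt_one (by positivity) ((div_lt_one hqm).mpr hm)).mul_left _
  refine hgeom.of_nonneg_of_le (fun k => by positivity) fun k => ?_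
  -- `e^{-x} ≤ m! / x^m` beats the geometric growth of `R ^ k` once `q ^ m > R`
  have hexp : Real.exp (-(a * q ^ k)) ≤ m.factorial / (a * q ^ k) ^ m := by
    rw [Real.exp_neg, inv_le_comm₀ (Real.exp_pos _) (by positivity), inv_div]
    exact Real.pow_div_factorial_le_exp _ (by positivity) m
  calc R ^ k * Real.exp (-(a * q ^ k)) ≤ R ^ k * (m.factorial / (a * q ^ k) ^ m) := by gcongr
    _ = (m.factorial / a ^ m) * (R / q ^ m) ^ k := by
        rw [mul_pow, div_pow, ← pow_mul, ← pow_mul, mul_comm k m]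
        field_simp

namespace MeasureTheory

theorem Measure.addHaar_ball_norm_pow_mul {𝕜 E : Type*} [NormedField 𝕜]
    [NormedAddCommGroup E] [NormedSpace 𝕜 E] [LocallyCompactSpace E] [MeasurableSpace E]
    [BorelSpace E] (μ : Measure E) [μ.IsAddHaarMeasure] [μ.Regular] {c : 𝕜} (hc : c ≠ 0)
    (k : ℕ) (r : ℝ) :
    μ (ball 0 (‖c‖ ^ k * r)) = distribHaarChar E (Units.mk0 c hc) ^ k * μ (ball 0 r) := by
  have hball : ball (0 : E) (‖c‖ ^ k * r) = Units.mk0 c hc ^ k • ball 0 r := by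
    rw [Units.smul_def, Units.val_pow_eq_pow_val, Units.val_mk0,
      _root_.smul_ball (pow_ne_zero k hc), smul_zero, norm_pow]
  rw [hball, ← distribHaarChar_mul, map_pow, ENNReal.coe_pow]

theorem lintegral_le_of_le_antitoneOn_norm {E : Type*} [SeminormedAddCommGroup E]
    [MeasurableSpace E] [OpensMeasurableSpace E] (μ : Measure E) {g : E → ℝ≥0∞}
    {φ : ℝ → ℝ≥0∞} (hφ : AntitoneOn φ (Ici 0)) (hg : ∀ x, g x ≤ φ ‖x‖) {q : ℝ} (hq : 1 < q) :
    ∫⁻ x, g x ∂μ ≤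
      φ 0 * μ (ball 0 1) + ∑' k : ℕ, φ (q ^ k) * μ (ball 0 (q ^ (k + 1))) := by
  have hq0 : 0 ≤ q := zero_le_one.trans hq.le
  have hshells : ∀ x, g x ≤ (ball 0 1).indicator (fun _ => φ 0) x +
      ∑' k : ℕ, (ball 0 (q ^ (k + 1))).indicator (fun _ => φ (q ^ k)) x := by
    intro x
    rcases lt_or_ge ‖x‖ 1 with hx | hx
    · calc g x ≤ φ 0 := (hg x).trans (hφ self_mem_Ici (norm_nonneg x) (norm_nonneg x))
        _ = (ball 0 1).indicator (fun _ => φ 0) x :=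
            (indicator_of_mem (mem_ball_zero_iff.mpr hx) fun _ => φ 0).symm
        _ ≤ _ := le_self_add
    · obtain ⟨k, hk, hk'⟩ := exists_nat_pow_near hx hq
      calc g x ≤ φ (q ^ k) := (hg x).trans (hφ (pow_nonneg hq0 k) (norm_nonneg x) hk)
        _ = (ball 0 (q ^ (k + 1))).indicator (fun _ => φ (q ^ k)) x :=
            (indicator_of_mem (mem_ball_zero_iff.mpr hk') fun _ => φ (q ^ k)).symm
        _ ≤ ∑' k : ℕ, (ball 0 (q ^ (k + 1))).indicator (fun _ => φ (q ^ k)) x :=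
            ENNReal.le_tsum k
        _ ≤ _ := le_add_self
  refine (lintegral_mono hshells).trans_eq ?_
  rw [lintegral_add_left (measurable_const.indicator measurableSet_ball),
    lintegral_tsum fun k => (measurable_const.indicator measurableSet_ball).aemeasurable]
  simp only [lintegral_indicator_const measurableSet_ball]

theorem integrable_exp_neg_mul_norm_rpow {𝕜 E : Type*} [NontriviallyNormedField 𝕜]
    [NormedAddCommGroup E] [NormedSpace 𝕜 E] [ProperSpace E] [MeasurableSpace E] [BorelSpace E]
    (μ : Measure E) [μ.IsAddHaarMeasure] {a γ : ℝ} (ha : 0 < a) (hγ : 0 < γ) :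
    Integrable (fun x : E => Real.exp (-(a * ‖x‖ ^ γ))) μ := by
  obtain ⟨c, hc⟩ := NormedField.exists_one_lt_norm 𝕜
  have hc0 : c ≠ 0 := norm_pos_iff.mp (zero_lt_one.trans hc)
  set χ := distribHaarChar E (Units.mk0 c hc0)
  set φ : ℝ → ℝ≥0∞ := fun r => ENNReal.ofReal (Real.exp (-(a * r ^ γ)))
  have hφ : AntitoneOn φ (Ici 0) := fun r hr s _ hrs =>
    ENNReal.ofReal_le_ofReal (Real.exp_le_exp.mpr (by gcongr))
  set u : ℕ → ℝ := fun k => Real.exp (-(a * (‖c‖ ^ k) ^ γ)) * χ ^ (k + 1)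
  have hsum : Summable u := by
    refine ((summable_pow_mul_exp_neg_mul_pow ha (Real.one_lt_rpow hc hγ)
      χ.coe_nonneg).mul_left (χ : ℝ)).congr fun k => ?_
    simp only [u, Real.rpow_pow_comm (norm_nonneg c)]
    ring
  have hterm : ∀ k : ℕ, φ (‖c‖ ^ k) * μ (ball 0 (‖c‖ ^ (k + 1))) =
      ENNReal.ofReal (u k) * μ (ball 0 1) := by
    intro k
    rw [← mul_one (‖c‖ ^ (k + 1)), Measure.addHaar_ball_norm_pow_mul μ hc0, ← mul_assoc,
      ENNReal.ofReal_mul (Real.exp_pos _).le, ← NNReal.coe_pow, ENNReal.ofReal_coe_nnreal,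
      ENNReal.coe_pow]
  have hcont : Continuous fun x : E => Real.exp (-(a * ‖x‖ ^ γ)) := by
    fun_prop (disch := exact hγ.le)
  refine ⟨hcont.aestronglyMeasurable,
    (hasFiniteIntegral_iff_ofReal (ae_of_all _ fun x => (Real.exp_pos _).le)).mpr ?_⟩
  calc ∫⁻ x, φ ‖x‖ ∂μ
      ≤ φ 0 * μ (ball 0 1) + ∑' k : ℕ, φ (‖c‖ ^ k) * μ (ball 0 (‖c‖ ^ (k + 1))) :=
        lintegral_le_of_le_antitoneOn_norm μ hφ (fun x => le_rfl) hc
    _ = φ 0 * μ (ball 0 1) + (∑' k, ENNReal.ofReal (u k)) * μ (ball 0 1) := by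
        rw [← ENNReal.tsum_mul_right]
        simp only [hterm]
    _ < ∞ := by
        rw [← ENNReal.ofReal_tsum_of_nonneg (fun k => by positivity) hsum]
        have := measure_ball_lt_top (μ := μ) (x := 0) (r := 1)
        finiteness

end MeasureTheory

/-- For an elliptic polynomial `f` of degree `d`, `β > 0`, `1 ≤ ρ < ∞` and `t > 0`,
the function `ξ ↦ e^{-t|f(ξ)|_p^β}` belongs to `L^ρ(ℚ_p^n)` for the Haar measure. -/
theorem exp_symbol_memLp (p : ℕ) [Fact p.Prime] [MeasurableSpace ℚ_[p]] [BorelSpace ℚ_[p]]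
    (n d : ℕ) (hd : 0 < d)
    (f : MvPolynomial (Fin n) ℚ_[p])
    (hhom : f.IsHomogeneous d)
    (hzero : ∀ ξ : Fin n → ℚ_[p], eval ξ f = 0 ↔ ξ = 0)
    (β : ℝ) (hβ : 0 < β) (ρ : ℝ) (hρ : 1 ≤ ρ) (t : ℝ) (ht : 0 < t)
    (μ : Measure (Fin n → ℚ_[p])) [μ.IsAddHaarMeasure] :
    MemLp (fun ξ : Fin n → ℚ_[p] => Real.exp (-(t * ‖eval ξ f‖ ^ β)))
      (ENNReal.ofReal ρ) μ := by
  obtain ⟨C, hC, hell⟩ := hhom.exists_pos_mul_norm_pow_le hd hzero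
  have hρ0 : 0 < ρ := zero_lt_one.trans_le hρ
  have hcont : Continuous fun ξ : Fin n → ℚ_[p] => Real.exp (-(t * ‖eval ξ f‖ ^ β)) := by
    have := continuous_eval f
    fun_prop (disch := exact hβ.le)
  rw [← integrable_norm_rpow_iff hcont.aestronglyMeasurable (by simpa using hρ0)
    ENNReal.ofReal_ne_top, ENNReal.toReal_ofReal hρ0.le]
  refine (integrable_exp_neg_mul_norm_rpow (𝕜 := ℚ_[p]) μ (a := t * ρ * C ^ β) (γ := d * β)
    (by positivity) (by positivity)).mono'
    (hcont.norm.rpow_const fun _ => Or.inr hρ0.le).aestronglyMeasurable (ae_of_all _ fun ξ => ?_)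
  have hlower : C ^ β * ‖ξ‖ ^ (d * β) ≤ ‖eval ξ f‖ ^ β := by
    rw [Real.rpow_natCast_mul (norm_nonneg ξ), ← Real.mul_rpow hC.le (by positivity)]
    exact Real.rpow_le_rpow (by positivity) (hell ξ) hβ.le
  calc ‖‖Real.exp (-(t * ‖eval ξ f‖ ^ β))‖ ^ ρ‖
      = Real.exp (-(t * ρ * ‖eval ξ f‖ ^ β)) := by
        rw [Real.norm_of_nonneg (by positivity), Real.norm_of_nonneg (by positivity),
          ← Real.exp_mul]
        ring_nf
    _ ≤ Real.exp (-(t * ρ * C ^ β * ‖ξ‖ ^ (d * β))) := by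
        rw [mul_assoc (t * ρ)]
        gcongr
end

section
/- The family of operators T_t (T_0 = id, T_t u = Z_t * u for t > 0) built from the heat kernel of an elliptic pseudo-differential operator is a Feller semigroup on ℚ_p^n: it is a strongly continuous contraction semigroup on C₀(ℚ_p^n) such that each T_t is positivity preserving (u ≥ 0 implies T_t u ≥ 0). -/
/-! For `t > 0`, `T_t` is convolution with the probability density `Z_t`, so it is positive,
contracts the sup norm and, by dominated convergence along the cocompact filter, maps `C₀` into
itself; the semigroup law is Chapman–Kolmogorov `Z_{t+s} = Z_t ⋆ Z_s` together with associativity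
of convolution. Strong continuity is the approximate-identity argument: uniform continuity of `u`
handles a small ball, and the mass of `Z_t` outside the ball of radius `δ` is at most
`A t ∫_{‖y‖>δ} ‖y‖^{-(dβ+n)}`. That integral is finite because a ball of radius `p^k` in `ℚ_p^n`
is covered by `p^n` balls of radius `p^(k-1)`, so volumes grow like `p^(nk)` while the integrand
decays faster. -/

open MeasureTheory Filter Topology

variable {p : ℕ} [Fact p.Prime] [MeasurableSpace ℚ_[p]] [BorelSpace ℚ_[p]] {n : ℕ}

/-- The semigroup operators: `T_0 u = u` and `T_t u = Z_t * u` for `t ≠ 0`. -/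
noncomputable def Tt (μ : Measure (Fin n → ℚ_[p])) (Z : ℝ → (Fin n → ℚ_[p]) → ℝ)
    (t : ℝ) (u : (Fin n → ℚ_[p]) → ℝ) (x : Fin n → ℚ_[p]) : ℝ :=
  if t = 0 then u x else ∫ y, Z t (x - y) * u y ∂μ

open Metric ContinuousLinearMap
open scoped ENNReal Convolution

section Convolution

variable {G : Type*} [NormedAddCommGroup G] [MeasurableSpace G] {μ : Measure G} {f g k : G → ℝ}
  {C : ℝ}

lemma exists_norm_le_of_tendsto_cocompact {X E : Type*} [TopologicalSpace X]
    [SeminormedAddCommGroup E] {u : X → E} (hu : Continuous u)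
    (hu0 : Tendsto u (cocompact X) (𝓝 0)) : ∃ C, ∀ x, ‖u x‖ ≤ C := by
  obtain ⟨C, hC⟩ := (ZeroAtInftyContinuousMap.isBounded_range ⟨⟨u, hu⟩, hu0⟩).exists_norm_le
  exact ⟨C, fun x => hC _ ⟨x, rfl⟩⟩

lemma norm_convolution_mul_le (hf : Integrable f μ) (hg : ∀ y, ‖g y‖ ≤ C) (x : G) :
    ‖(f ⋆[mul ℝ ℝ, μ] g) x‖ ≤ (∫ y, ‖f y‖ ∂μ) * C := by
  rw [convolution_mul, ← integral_mul_const]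
  refine norm_integral_le_of_norm_le (hf.norm.mul_const C) (Eventually.of_forall fun y => ?_)
  rw [norm_mul]
  exact mul_le_mul_of_nonneg_left (hg _) (norm_nonneg _)

lemma norm_convolution_mul_le_of_density (hf : Integrable f μ) (hf0 : ∀ y, 0 ≤ f y)
    (hf1 : ∫ y, f y ∂μ = 1) (hg : ∀ y, ‖g y‖ ≤ C) (x : G) : ‖(f ⋆[mul ℝ ℝ, μ] g) x‖ ≤ C := by
  simpa only [Real.norm_of_nonneg (hf0 _), hf1, one_mul] using norm_convolution_mul_le hf hg x

variable [BorelSpace G]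

lemma tendsto_convolution_mul_cocompact [ProperSpace G] (hf : Integrable f μ) (hg : Continuous g)
    (hC : ∀ y, ‖g y‖ ≤ C) (hg0 : Tendsto g (cocompact G) (𝓝 0)) :
    Tendsto (f ⋆[mul ℝ ℝ, μ] g) (cocompact G) (𝓝 0) := by
  have : (cocompact G).IsCountablyGenerated := by
    rw [← cobounded_eq_cocompact, ← comap_norm_atTop]
    infer_instance
  have hlim := tendsto_integral_filter_of_dominated_convergence
    (F := fun x y => f y * g (x - y)) (fun y => ‖f y‖ * C)
    (Eventually.of_forall fun x => hf.aestronglyMeasurable.mul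
      (hg.comp (continuous_const.sub continuous_id)).aestronglyMeasurable)
    (Eventually.of_forall fun x => Eventually.of_forall fun y => by
      rw [norm_mul]; exact mul_le_mul_of_nonneg_left (hC _) (norm_nonneg _))
    (hf.norm.mul_const C)
    (Eventually.of_forall fun y =>
      (hg0.comp (Homeomorph.subRight y).isClosedEmbedding.tendsto_cocompact).const_mul (f y))
  simpa only [mul_zero, integral_zero, ← convolution_mul] using hlim

lemma norm_convolution_mul_sub_le (hf : Integrable f μ) (hf0 : ∀ y, 0 ≤ f y)
    (hf1 : ∫ y, f y ∂μ = 1) (hg : Continuous g) (hC : ∀ y, ‖g y‖ ≤ C) {x : G} {δ ε : ℝ}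
    (hε : 0 ≤ ε) (hδ : ∀ y, ‖y‖ ≤ δ → ‖g (x - y) - g x‖ ≤ ε) :
    ‖(f ⋆[mul ℝ ℝ, μ] g) x - g x‖ ≤ ε + 2 * C * ∫ y in (closedBall 0 δ)ᶜ, f y ∂μ := by
  have hfg : Integrable (fun y => f y * g (x - y)) μ :=
    hf.mul_bdd (hg.comp (continuous_const.sub continuous_id)).aestronglyMeasurable
      (Eventually.of_forall fun y => hC _)
  have htail : MeasurableSet (closedBall (0 : G) δ)ᶜ := measurableSet_closedBall.compl
  have hdiff : (f ⋆[mul ℝ ℝ, μ] g) x - g x = ∫ y, f y * (g (x - y) - g x) ∂μ := by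
    simp_rw [convolution_mul, mul_sub]
    rw [integral_sub hfg (hf.mul_const _), integral_mul_const, hf1, one_mul]
  have hpointwise : ∀ y, ‖f y * (g (x - y) - g x)‖ ≤
      ε * f y + 2 * C * (closedBall (0 : G) δ)ᶜ.indicator f y := by
    intro y
    rw [norm_mul, Real.norm_of_nonneg (hf0 y)]
    by_cases hy : y ∈ closedBall (0 : G) δ
    · rw [Set.indicator_of_notMem (Set.notMem_compl_iff.2 hy), mul_zero, add_zero, mul_comm ε]
      exact mul_le_mul_of_nonneg_left (hδ y (mem_closedBall_zero_iff.1 hy)) (hf0 y)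
    · rw [Set.indicator_of_mem hy]
      have : ‖g (x - y) - g x‖ ≤ 2 * C := (norm_sub_le _ _).trans (by linarith [hC (x - y), hC x])
      nlinarith [hf0 y]
  calc ‖(f ⋆[mul ℝ ℝ, μ] g) x - g x‖
      ≤ ∫ y, (ε * f y + 2 * C * (closedBall (0 : G) δ)ᶜ.indicator f y) ∂μ := by
        rw [hdiff]
        exact norm_integral_le_of_norm_le
          ((hf.const_mul ε).add ((hf.indicator htail).const_mul _))
          (Eventually.of_forall hpointwise)
    _ = ε + 2 * C * ∫ y in (closedBall 0 δ)ᶜ, f y ∂μ := by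
        rw [integral_add (hf.const_mul ε) ((hf.indicator htail).const_mul _),
          integral_const_mul, integral_const_mul, integral_indicator htail, hf1, mul_one]

lemma tendstoUniformly_convolution_mul_nhdsGT {g : ℝ → G → ℝ} {u : G → ℝ}
    (hg0 : ∀ t : ℝ, 0 < t → ∀ y, 0 ≤ g t y) (hgi : ∀ t : ℝ, 0 < t → Integrable (g t) μ)
    (hg1 : ∀ t : ℝ, 0 < t → ∫ y, g t y ∂μ = 1)
    (hconc : ∀ δ : ℝ, 0 < δ → Tendsto (fun t => ∫ y in (closedBall 0 δ)ᶜ, g t y ∂μ) (𝓝[>] 0) (𝓝 0))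
    (hu : Continuous u) (hu0 : Tendsto u (cocompact G) (𝓝 0)) :
    TendstoUniformly (fun t => g t ⋆[mul ℝ ℝ, μ] u) u (𝓝[>] 0) := by
  obtain ⟨M, hM⟩ := exists_norm_le_of_tendsto_cocompact hu hu0
  rw [Metric.tendstoUniformly_iff]
  intro ε hε
  obtain ⟨δ, hδ, huδ⟩ := Metric.uniformContinuous_iff.1
    (hu.uniformContinuous_of_tendsto_cocompact hu0) (ε / 2) (half_pos hε)
  have hmodulus : ∀ x y, ‖y‖ ≤ δ / 2 → ‖u (x - y) - u x‖ ≤ ε / 2 := fun x y hy => by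
    rw [← dist_eq_norm]
    refine (huδ ?_).le
    rw [dist_eq_norm, sub_sub_cancel_left, norm_neg]
    linarith
  have htail : Tendsto (fun t => 2 * M * ∫ y in (closedBall 0 (δ / 2))ᶜ, g t y ∂μ) (𝓝[>] 0)
      (𝓝 0) := by
    simpa using (hconc (δ / 2) (half_pos hδ)).const_mul (2 * M)
  filter_upwards [htail.eventually (gt_mem_nhds (half_pos hε)), self_mem_nhdsWithin]
    with t ht (htpos : 0 < t) x
  rw [dist_comm, dist_eq_norm]
  have := norm_convolution_mul_sub_le (hgi t htpos) (hg0 t htpos) (hg1 t htpos) hu hM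
    (half_pos hε).le (hmodulus x)
  linarith

variable [SecondCountableTopology G]

lemma convolutionExistsAt_mul_of_bounded [μ.IsAddLeftInvariant] [SFinite μ]
    (hf : Integrable f μ) (hg : AEStronglyMeasurable g μ) (hC : ∀ y, ‖g y‖ ≤ C) (x : G) :
    ConvolutionExistsAt f g x (mul ℝ ℝ) μ :=
  BddAbove.convolutionExistsAt _ ⟨C, by rintro _ ⟨y, -, rfl⟩; exact hC y⟩ MeasurableSet.univ
    (Set.subset_univ _) hf.integrableOn hg

lemma convolution_mul_assoc_of_bounded [μ.IsAddLeftInvariant] [μ.IsAddRightInvariant]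
    [μ.IsNegInvariant] [SFinite μ] (hf : Integrable f μ) (hg : Integrable g μ)
    (hk : Continuous k) (hC : ∀ y, ‖k y‖ ≤ C) :
    (f ⋆[mul ℝ ℝ, μ] g) ⋆[mul ℝ ℝ, μ] k = f ⋆[mul ℝ ℝ, μ] (g ⋆[mul ℝ ℝ, μ] k) := by
  have hgk_bdd : ∀ y, ‖((fun x => ‖g x‖) ⋆[mul ℝ ℝ, μ] fun x => ‖k x‖) y‖
      ≤ (∫ x, ‖‖g x‖‖ ∂μ) * C :=
    norm_convolution_mul_le hg.norm (fun y => by simpa using hC y)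
  have hgk_cont : Continuous ((fun x => ‖g x‖) ⋆[mul ℝ ℝ, μ] fun x => ‖k x‖) :=
    BddAbove.continuous_convolution_right_of_integrable _
      ⟨C, by rintro _ ⟨y, rfl⟩; simpa using hC y⟩ hg.norm hk.norm
  ext x₀
  exact convolution_assoc _ _ _ _ (fun a b c => mul_assoc a b c) hf.aestronglyMeasurable
    hg.aestronglyMeasurable hk.aestronglyMeasurable (hf.ae_convolution_exists _ hg)
    (Eventually.of_forall fun x => convolutionExistsAt_mul_of_bounded hg.norm
      hk.norm.aestronglyMeasurable (fun y => by simpa using hC y) x)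
    (convolutionExistsAt_mul_of_bounded hf.norm hgk_cont.aestronglyMeasurable hgk_bdd x₀)

end Convolution

lemma compl_closedBall_subset_iUnion_sdiff_ball {E : Type*} [SeminormedAddCommGroup E]
    {r q : ℝ} (hr : 0 < r) (hq : 1 < q) :
    (closedBall (0 : E) r)ᶜ ⊆ ⋃ m : ℕ, closedBall 0 (r * q ^ (m + 1)) \ ball 0 (r * q ^ m) := by
  intro y hy
  have hy' : r ≤ ‖y‖ := (lt_of_not_ge (mt mem_closedBall_zero_iff.2 hy)).le
  obtain ⟨m, hm₁, hm₂⟩ := exists_nat_pow_near ((one_le_div hr).2 hy') hq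
  refine Set.mem_iUnion.2 ⟨m, mem_closedBall_zero_iff.2 ?_, fun h => ?_⟩
  · exact ((div_lt_iff₀' hr).1 hm₂).le
  · exact (mem_ball_zero_iff.1 h).not_ge ((le_div_iff₀' hr).1 hm₁)

lemma integrableOn_norm_rpow_neg_compl_closedBall {E : Type*} [NormedAddCommGroup E]
    [MeasurableSpace E] [BorelSpace E] [ProperSpace E] {μ : Measure E}
    [IsFiniteMeasureOnCompacts μ] {r q s a C : ℝ} (hr : 0 < r) (hq : 1 < q) (hs : 0 ≤ s)
    (ha₀ : 0 ≤ a) (ha : a < q ^ s)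
    (hgrowth : ∀ m : ℕ, μ.real (closedBall 0 (r * q ^ m)) ≤ C * a ^ m) :
    IntegrableOn (fun y => ‖y‖ ^ (-s)) (closedBall (0 : E) r)ᶜ μ := by
  have hq₀ : 0 < q := zero_lt_one.trans hq
  set shell : ℕ → Set E := fun m => closedBall 0 (r * q ^ (m + 1)) \ ball 0 (r * q ^ m)
  have hbound : ∀ m, ∀ y ∈ shell m, ‖‖y‖ ^ (-s)‖ ≤ (r * q ^ m) ^ (-s) := by
    intro m y hy
    have hy' : r * q ^ m ≤ ‖y‖ := not_lt.1 fun h => hy.2 (mem_ball_zero_iff.2 h)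
    rw [Real.norm_of_nonneg (by positivity)]
    exact Real.rpow_le_rpow_of_nonpos (by positivity) hy' (neg_nonpos.2 hs)
  have hfinite : ∀ m, μ (shell m) < ⊤ :=
    fun m => (measure_mono Set.sdiff_subset).trans_lt (isCompact_closedBall _ _).measure_lt_top
  have hmeasure : ∀ m, μ.real (shell m) ≤ C * a ^ (m + 1) := fun m =>
    (measureReal_mono Set.sdiff_subset (isCompact_closedBall _ _).measure_lt_top.ne).trans
      (hgrowth (m + 1))
  have hterm : ∀ m : ℕ,
      (r * q ^ m) ^ (-s) * (C * a ^ (m + 1)) = C * a * r ^ (-s) * (a / q ^ s) ^ m := by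
    intro m
    rw [Real.mul_rpow hr.le (by positivity), Real.rpow_neg (by positivity),
      Real.rpow_neg (by positivity), ← Real.rpow_natCast, ← Real.rpow_mul hq₀.le, mul_comm (m : ℝ),
      Real.rpow_mul hq₀.le, Real.rpow_natCast, div_pow]
    field_simp
    ring
  refine IntegrableOn.mono_set ?_ (compl_closedBall_subset_iUnion_sdiff_ball hr hq)
  refine integrableOn_iUnion_of_summable_integral_norm
    (fun m => Measure.integrableOn_of_bounded (hfinite m).ne
      (measurable_norm.pow_const _).aestronglyMeasurable
      ((ae_restrict_iff' (measurableSet_closedBall.diff measurableSet_ball)).2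
        (Eventually.of_forall (hbound m)))) ?_
  refine Summable.of_nonneg_of_le (fun m => integral_nonneg fun y => norm_nonneg _) (fun m => ?_)
    ((summable_geometric_of_lt_one (by positivity) ((div_lt_one (by positivity)).2 ha)).mul_left
      (C * a * r ^ (-s)))
  calc ∫ y in shell m, ‖‖y‖ ^ (-s)‖ ∂μ ≤ (r * q ^ m) ^ (-s) * μ.real (shell m) :=
        (Real.le_norm_self _).trans (norm_setIntegral_le_of_norm_le_const (hfinite m)
          fun y hy => (norm_norm _).trans_le (hbound m y hy))
    _ ≤ (r * q ^ m) ^ (-s) * (C * a ^ (m + 1)) :=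
        mul_le_mul_of_nonneg_left (hmeasure m) (by positivity)
    _ = C * a * r ^ (-s) * (a / q ^ s) ^ m := hterm m

omit [MeasurableSpace ℚ_[p]] [BorelSpace ℚ_[p]] in
lemma Padic.exists_norm_sub_natCast_mul_zpow_le {x : ℚ_[p]} {k : ℤ} (hx : ‖x‖ ≤ (p : ℝ) ^ k) :
    ∃ j < p, ‖x - j * (p : ℚ_[p]) ^ (-k)‖ ≤ (p : ℝ) ^ (k - 1) := by
  have hp : (0 : ℝ) < p := by exact_mod_cast (Fact.out : p.Prime).pos
  have hp' : (p : ℚ_[p]) ≠ 0 := by exact_mod_cast (Fact.out : p.Prime).ne_zero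
  have hz : ‖x * (p : ℚ_[p]) ^ k‖ ≤ 1 := by
    rw [norm_mul, Padic.norm_p_zpow, zpow_neg, ← div_eq_mul_inv]
    exact (div_le_one (by positivity)).2 hx
  set z : ℤ_[p] := ⟨_, hz⟩
  obtain ⟨j, hjp, hj⟩ := PadicInt.exists_mem_range z
  refine ⟨j, hjp, ?_⟩
  have hj' : ‖x * (p : ℚ_[p]) ^ k - j‖ ≤ (p : ℝ) ^ (-1 : ℤ) := by
    rw [Padic.norm_le_pow_iff_norm_lt_pow_add_one, neg_add_cancel, zpow_zero]
    exact PadicInt.mem_nonunits.1 ((IsLocalRing.mem_maximalIdeal _).1 hj)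
  have hsplit : x - j * (p : ℚ_[p]) ^ (-k) = (x * (p : ℚ_[p]) ^ k - j) * (p : ℚ_[p]) ^ (-k) := by
    rw [sub_mul, mul_assoc, ← zpow_add₀ hp', add_neg_cancel, zpow_zero, mul_one]
  rw [hsplit, norm_mul, Padic.norm_p_zpow, neg_neg, sub_eq_neg_add k, zpow_add₀ hp.ne']
  exact mul_le_mul_of_nonneg_right hj' (by positivity)

omit [MeasurableSpace ℚ_[p]] [BorelSpace ℚ_[p]] in
lemma closedBall_zpow_subset_iUnion_closedBall (k : ℤ) :
    closedBall (0 : Fin n → ℚ_[p]) ((p : ℝ) ^ k) ⊆ ⋃ c : Fin n → Fin p,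
      closedBall (fun i => ((c i : ℕ) : ℚ_[p]) * (p : ℚ_[p]) ^ (-k)) ((p : ℝ) ^ (k - 1)) := by
  have hp : (0 : ℝ) < p := by exact_mod_cast (Fact.out : p.Prime).pos
  intro y hy
  rw [mem_closedBall_zero_iff, pi_norm_le_iff_of_nonneg (by positivity)] at hy
  choose c hc hcy using fun i => Padic.exists_norm_sub_natCast_mul_zpow_le (hy i)
  refine Set.mem_iUnion.2 ⟨fun i => ⟨c i, hc i⟩, ?_⟩
  rw [mem_closedBall, dist_eq_norm, pi_norm_le_iff_of_nonneg (by positivity)]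
  exact hcy

lemma measure_closedBall_zpow_le (μ : Measure (Fin n → ℚ_[p])) [μ.IsAddHaarMeasure] (k : ℤ) :
    μ (closedBall 0 ((p : ℝ) ^ k)) ≤ (p : ℝ≥0∞) ^ n * μ (closedBall 0 ((p : ℝ) ^ (k - 1))) := by
  calc μ (closedBall 0 ((p : ℝ) ^ k))
      ≤ ∑ c : Fin n → Fin p,
          μ (closedBall (fun i => ((c i : ℕ) : ℚ_[p]) * (p : ℚ_[p]) ^ (-k)) ((p : ℝ) ^ (k - 1))) :=
        (measure_mono (closedBall_zpow_subset_iUnion_closedBall k)).trans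
          (measure_iUnion_fintype_le _ _)
    _ = (p : ℝ≥0∞) ^ n * μ (closedBall 0 ((p : ℝ) ^ (k - 1))) := by
        simp [Measure.addHaar_closedBall_center]

lemma measure_closedBall_zpow_add_le (μ : Measure (Fin n → ℚ_[p])) [μ.IsAddHaarMeasure] (k : ℤ)
    (m : ℕ) : μ (closedBall 0 ((p : ℝ) ^ (k + m))) ≤
      ((p : ℝ≥0∞) ^ n) ^ m * μ (closedBall 0 ((p : ℝ) ^ k)) := by
  induction m with
  | zero => simp
  | succ m ih =>
    calc μ (closedBall 0 ((p : ℝ) ^ (k + (m + 1 : ℕ))))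
        ≤ (p : ℝ≥0∞) ^ n * μ (closedBall 0 ((p : ℝ) ^ (k + m))) := by
          simpa [← add_assoc] using measure_closedBall_zpow_le μ (k + (m + 1 : ℕ))
      _ ≤ ((p : ℝ≥0∞) ^ n) ^ (m + 1) * μ (closedBall 0 ((p : ℝ) ^ k)) := by
          rw [pow_succ', mul_assoc]
          gcongr

lemma integrableOn_norm_rpow_neg_compl_closedBall_padic (μ : Measure (Fin n → ℚ_[p]))
    [μ.IsAddHaarMeasure] {s r : ℝ} (hs : n < s) (hr : 0 < r) :
    IntegrableOn (fun y => ‖y‖ ^ (-s)) (closedBall 0 r)ᶜ μ := by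
  have hp : (1 : ℝ) < p := by exact_mod_cast (Fact.out : p.Prime).one_lt
  obtain ⟨k, hk, -⟩ := exists_mem_Ioc_zpow hr hp
  refine IntegrableOn.mono_set ?_ (Set.compl_subset_compl.2 (closedBall_subset_closedBall hk.le))
  refine integrableOn_norm_rpow_neg_compl_closedBall (C := μ.real (closedBall 0 ((p : ℝ) ^ k)))
    (a := (p : ℝ) ^ n) (by positivity) hp ((Nat.cast_nonneg n).trans hs.le) (by positivity) ?_
    fun m => ?_
  · rw [← Real.rpow_natCast]
    exact Real.rpow_lt_rpow_of_exponent_lt hp hs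
  · rw [← zpow_natCast, ← zpow_add₀ (by positivity), measureReal_def, measureReal_def]
    calc (μ (closedBall 0 ((p : ℝ) ^ (k + m)))).toReal
        ≤ (((p : ℝ≥0∞) ^ n) ^ m * μ (closedBall 0 ((p : ℝ) ^ k))).toReal :=
          ENNReal.toReal_mono
            (ENNReal.mul_ne_top (by simp) (isCompact_closedBall _ _).measure_lt_top.ne)
            (measure_closedBall_zpow_add_le μ k m)
      _ = (μ (closedBall 0 ((p : ℝ) ^ k))).toReal * ((p : ℝ) ^ n) ^ m := by
          simp [ENNReal.toReal_mul, mul_comm]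

section HeatKernel

variable {μ : Measure (Fin n → ℚ_[p])} {Z : ℝ → (Fin n → ℚ_[p]) → ℝ} {u : (Fin n → ℚ_[p]) → ℝ}

omit [BorelSpace ℚ_[p]] in
lemma Tt_zero : Tt μ Z 0 u = u :=
  funext fun _ => if_pos rfl

lemma Tt_of_ne_zero [μ.IsAddHaarMeasure] {t : ℝ} (ht : t ≠ 0) :
    Tt μ Z t u = Z t ⋆[mul ℝ ℝ, μ] u :=
  funext fun x => by rw [Tt, if_neg ht, convolution_mul_swap]

lemma Tt_add [μ.IsAddHaarMeasure] (hint : ∀ t : ℝ, 0 < t → Integrable (Z t) μ)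
    (hCK : ∀ t s : ℝ, 0 < t → 0 < s → ∀ x, Z (t + s) x = ∫ y, Z t (x - y) * Z s y ∂μ)
    {t s M : ℝ} (ht : 0 ≤ t) (hs : 0 ≤ s) (hu : Continuous u) (hM : ∀ y, ‖u y‖ ≤ M) :
    Tt μ Z (t + s) u = Tt μ Z t (Tt μ Z s u) := by
  rcases ht.eq_or_lt with rfl | ht
  · rw [zero_add, Tt_zero]
  rcases hs.eq_or_lt with rfl | hs
  · rw [add_zero, Tt_zero]
  have hZts : Z (t + s) = Z t ⋆[mul ℝ ℝ, μ] Z s :=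
    funext fun x => by rw [hCK t s ht hs x, convolution_mul_swap]
  rw [Tt_of_ne_zero (add_pos ht hs).ne', Tt_of_ne_zero ht.ne', Tt_of_ne_zero hs.ne', hZts,
    convolution_mul_assoc_of_bounded (hint t ht) (hint s hs) hu hM]

lemma tendsto_setIntegral_compl_closedBall_of_decay [μ.IsAddHaarMeasure]
    (hposZ : ∀ t : ℝ, 0 < t → ∀ x, 0 ≤ Z t x) (hint : ∀ t : ℝ, 0 < t → Integrable (Z t) μ)
    {A s : ℝ} (hs : n < s) (hdecay : ∀ t : ℝ, 0 < t → ∀ x, x ≠ 0 → Z t x ≤ A * t * ‖x‖ ^ (-s))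
    {δ : ℝ} (hδ : 0 < δ) :
    Tendsto (fun t => ∫ y in (closedBall 0 δ)ᶜ, Z t y ∂μ) (𝓝[>] 0) (𝓝 0) := by
  set I := ∫ y in (closedBall 0 δ)ᶜ, ‖y‖ ^ (-s) ∂μ
  have hI := integrableOn_norm_rpow_neg_compl_closedBall_padic μ hs hδ
  have hbound : ∀ t : ℝ, 0 < t → ∫ y in (closedBall 0 δ)ᶜ, Z t y ∂μ ≤ A * t * I := by
    intro t ht
    rw [← integral_const_mul]
    refine setIntegral_mono_on (hint t ht).integrableOn (hI.const_mul _)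
      measurableSet_closedBall.compl fun y hy => hdecay t ht y ?_
    rintro rfl
    exact hy (mem_closedBall_self hδ.le)
  have hlin : Tendsto (fun t : ℝ => A * t * I) (𝓝[>] 0) (𝓝 0) := by
    have hcont : Continuous fun t : ℝ => A * t * I := by fun_prop
    exact (hcont.tendsto' 0 0 (by simp)).mono_left nhdsWithin_le_nhds
  exact tendsto_of_tendsto_of_tendsto_of_le_of_le' tendsto_const_nhds hlin
    (eventually_nhdsWithin_of_forall fun t ht =>
      setIntegral_nonneg measurableSet_closedBall.compl fun y _ => hposZ t ht y)
    (eventually_nhdsWithin_of_forall hbound)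

end HeatKernel

theorem Tt_isFellerSemigroup_general
    (μ : Measure (Fin n → ℚ_[p])) [μ.IsAddHaarMeasure]
    (Z : ℝ → (Fin n → ℚ_[p]) → ℝ)
    (hposZ : ∀ t : ℝ, 0 < t → ∀ x, 0 ≤ Z t x)
    (hint : ∀ t : ℝ, 0 < t → Integrable (Z t) μ)
    (hone : ∀ t : ℝ, 0 < t → ∫ x, Z t x ∂μ = 1)
    (hCK : ∀ t s : ℝ, 0 < t → 0 < s → ∀ x : Fin n → ℚ_[p],
      Z (t + s) x = ∫ y, Z t (x - y) * Z s y ∂μ)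
    (A d β : ℝ) (hd : 0 < d) (hβ : 0 < β)
    (hdecay : ∀ t : ℝ, 0 < t → ∀ x : Fin n → ℚ_[p], x ≠ 0 →
      Z t x ≤ A * t * ‖x‖ ^ (-(d * β) - (n : ℝ))) :
    -- each `T_t` maps `C₀` into itself and is a contraction for the sup norm
    (∀ t : ℝ, 0 ≤ t → ∀ u : (Fin n → ℚ_[p]) → ℝ, Continuous u →
      Tendsto u (cocompact (Fin n → ℚ_[p])) (𝓝 0) →
      Continuous (Tt μ Z t u) ∧
      Tendsto (Tt μ Z t u) (cocompact (Fin n → ℚ_[p])) (𝓝 0) ∧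
      ∀ C : ℝ, 0 ≤ C → (∀ y, |u y| ≤ C) → ∀ x, |Tt μ Z t u x| ≤ C) ∧
    -- semigroup property
    (∀ t s : ℝ, 0 ≤ t → 0 ≤ s → ∀ u : (Fin n → ℚ_[p]) → ℝ, Continuous u →
      Tendsto u (cocompact (Fin n → ℚ_[p])) (𝓝 0) →
      Tt μ Z (t + s) u = Tt μ Z t (Tt μ Z s u)) ∧
    -- strong continuity at `t = 0`
    (∀ u : (Fin n → ℚ_[p]) → ℝ, Continuous u →
      Tendsto u (cocompact (Fin n → ℚ_[p])) (𝓝 0) →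
      ∀ ε : ℝ, 0 < ε → ∃ δ : ℝ, 0 < δ ∧ ∀ t : ℝ, 0 < t → t < δ →
        ∀ x, |Tt μ Z t u x - u x| ≤ ε) ∧
    -- positivity
    (∀ t : ℝ, 0 ≤ t → ∀ u : (Fin n → ℚ_[p]) → ℝ, Continuous u →
      Tendsto u (cocompact (Fin n → ℚ_[p])) (𝓝 0) →
      (∀ y, 0 ≤ u y) → ∀ x, 0 ≤ Tt μ Z t u x) := by
  have hZ : ∀ t : ℝ, 0 < t → ∀ u, Tt μ Z t u = Z t ⋆[mul ℝ ℝ, μ] u :=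
    fun t ht u => Tt_of_ne_zero ht.ne'
  have hconc : ∀ δ : ℝ, 0 < δ →
      Tendsto (fun t => ∫ y in (closedBall 0 δ)ᶜ, Z t y ∂μ) (𝓝[>] 0) (𝓝 0) :=
    fun δ hδ => tendsto_setIntegral_compl_closedBall_of_decay hposZ hint
      (by linarith [mul_pos hd hβ] : (n : ℝ) < d * β + n) (by simpa only [neg_add'] using hdecay) hδ
  refine ⟨fun t ht u hu hu0 => ?_, fun t s ht hs u hu hu0 => ?_, fun u hu hu0 ε hε => ?_,
    fun t ht u _ _ hu x => ?_⟩
  · rcases ht.eq_or_lt with rfl | ht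
    · exact ⟨by rwa [Tt_zero], by rwa [Tt_zero], fun C _ hC => by rwa [Tt_zero]⟩
    obtain ⟨M, hM⟩ := exists_norm_le_of_tendsto_cocompact hu hu0
    rw [hZ t ht]
    exact ⟨BddAbove.continuous_convolution_right_of_integrable _
      ⟨M, by rintro _ ⟨y, rfl⟩; exact hM y⟩ (hint t ht) hu,
      tendsto_convolution_mul_cocompact (hint t ht) hu hM hu0,
      fun C _ hC => norm_convolution_mul_le_of_density (hint t ht) (hposZ t ht) (hone t ht) hC⟩
  · obtain ⟨M, hM⟩ := exists_norm_le_of_tendsto_cocompact hu hu0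
    exact Tt_add hint hCK ht hs hu hM
  · obtain ⟨δ, hδ, hδt⟩ := (nhdsGT_basis 0).eventually_iff.1 (Metric.tendstoUniformly_iff.1
      (tendstoUniformly_convolution_mul_nhdsGT hposZ hint hone hconc hu hu0) ε hε)
    refine ⟨δ, hδ, fun t ht htδ x => ?_⟩
    rw [hZ t ht, ← Real.dist_eq, dist_comm]
    exact (hδt ⟨ht, htδ⟩ x).le
  · rcases ht.eq_or_lt with rfl | ht
    · simpa only [Tt_zero] using hu x
    rw [Tt, if_neg ht.ne']
    exact integral_nonneg fun y => mul_nonneg (hposZ t ht _) (hu y)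

/-- The operators built from the heat kernel of an elliptic pseudo-differential operator form
a Feller semigroup on `ℚ_p^n`: a strongly continuous semigroup of positive contraction
operators on `C₀(ℚ_p^n)` preserving `C₀(ℚ_p^n)`. -/
theorem Tt_isFellerSemigroup
    (μ : Measure (Fin n → ℚ_[p])) [μ.IsAddHaarMeasure]
    (Z : ℝ → (Fin n → ℚ_[p]) → ℝ)
    (hposZ : ∀ t : ℝ, 0 < t → ∀ x, 0 ≤ Z t x)
    (hcont : ∀ t : ℝ, 0 < t → Continuous (Z t))
    (hint : ∀ t : ℝ, 0 < t → Integrable (Z t) μ)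
    (hone : ∀ t : ℝ, 0 < t → ∫ x, Z t x ∂μ = 1)
    (hCK : ∀ t s : ℝ, 0 < t → 0 < s → ∀ x : Fin n → ℚ_[p],
      Z (t + s) x = ∫ y, Z t (x - y) * Z s y ∂μ)
    (A d β : ℝ) (hA : 0 < A) (hd : 0 < d) (hβ : 0 < β)
    (hdecay : ∀ t : ℝ, 0 < t → ∀ x : Fin n → ℚ_[p], x ≠ 0 →
      Z t x ≤ A * t * ‖x‖ ^ (-(d * β) - (n : ℝ))) :
    -- each `T_t` maps `C₀` into itself and is a contraction for the sup norm
    (∀ t : ℝ, 0 ≤ t → ∀ u : (Fin n → ℚ_[p]) → ℝ, Continuous u →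
      Tendsto u (cocompact (Fin n → ℚ_[p])) (𝓝 0) →
      Continuous (Tt μ Z t u) ∧
      Tendsto (Tt μ Z t u) (cocompact (Fin n → ℚ_[p])) (𝓝 0) ∧
      ∀ C : ℝ, 0 ≤ C → (∀ y, |u y| ≤ C) → ∀ x, |Tt μ Z t u x| ≤ C) ∧
    -- semigroup property
    (∀ t s : ℝ, 0 ≤ t → 0 ≤ s → ∀ u : (Fin n → ℚ_[p]) → ℝ, Continuous u →
      Tendsto u (cocompact (Fin n → ℚ_[p])) (𝓝 0) →
      Tt μ Z (t + s) u = Tt μ Z t (Tt μ Z s u)) ∧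
    -- strong continuity at `t = 0`
    (∀ u : (Fin n → ℚ_[p]) → ℝ, Continuous u →
      Tendsto u (cocompact (Fin n → ℚ_[p])) (𝓝 0) →
      ∀ ε : ℝ, 0 < ε → ∃ δ : ℝ, 0 < δ ∧ ∀ t : ℝ, 0 < t → t < δ →
        ∀ x, |Tt μ Z t u x - u x| ≤ ε) ∧
    -- positivity
    (∀ t : ℝ, 0 ≤ t → ∀ u : (Fin n → ℚ_[p]) → ℝ, Continuous u →
      Tendsto u (cocompact (Fin n → ℚ_[p])) (𝓝 0) →
      (∀ y, 0 ≤ u y) → ∀ x, 0 ≤ Tt μ Z t u x) :=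
  Tt_isFellerSemigroup_general μ Z hposZ hint hone hCK A d β hd hβ hdecay
end

section
/- Define p_t(x,E) = (Z_t * 1_E)(x) for t > 0 and p_0(x,E) = 1_E(x), for Borel sets E ⊆ ℚ_p^n. Then p_t is a Markov transition function: (a) p_t(x,·) is a measure with p_t(x, ℚ_p^n) = 1; (b) p_t(·,E) is Borel measurable; (c) p_0(x,{x}) = 1; and (d) the Chapman–Kolmogorov equation p_{t+s}(x,E) = ∫_{ℚ_p^n} p_t(x, d^n y) p_s(y, E) holds for all t, s ≥ 0. -/
/-! For `t > 0` the measure `p_t(x, ·)` has density `y ↦ Z_t (x - y)` with respect to Haar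
measure, and `p_0(x, ·)` is the Dirac mass at `x`; so (a)–(c) are properties of set integrals
and indicators. For `t, s > 0`, Chapman–Kolmogorov is the semigroup law `Z_{t+s} = Z_t * Z_s`
integrated over `E` with the order of integration exchanged: Fubini applies because
`(y, z) ↦ (y, y - z)` preserves the product Haar measure, which makes
`(y, z) ↦ Z_t (x - y) Z_s (y - z)` integrable. -/

open MeasureTheory

variable {p : ℕ} [Fact p.Prime] [MeasurableSpace ℚ_[p]] [BorelSpace ℚ_[p]] {n : ℕ}

/-- The transition function `p_t(x,E) = (Z_t * 1_E)(x)` for `t > 0`, `p_0(x,E) = 1_E(x)`. -/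
noncomputable def transFn (μ : Measure (Fin n → ℚ_[p])) (Z : ℝ → (Fin n → ℚ_[p]) → ℝ)
    (t : ℝ) (x : Fin n → ℚ_[p]) (E : Set (Fin n → ℚ_[p])) : ℝ :=
  if t = 0 then Set.indicator E (fun _ => (1 : ℝ)) x else ∫ y in E, Z t (x - y) ∂μ

theorem Set.indicator_iUnion_apply_of_pairwise_disjoint {ι α M : Type*} [AddCommMonoid M]
    [TopologicalSpace M] {E : ι → Set α} (hd : Pairwise (Function.onFun Disjoint E))
    (f : α → M) (x : α) :
    (⋃ i, E i).indicator f x = ∑' i, (E i).indicator f x := by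
  by_cases hx : x ∈ ⋃ i, E i
  · obtain ⟨i, hi⟩ := Set.mem_iUnion.mp hx
    rw [Set.indicator_of_mem hx, tsum_eq_single i, Set.indicator_of_mem hi]
    exact fun j hj => Set.indicator_of_notMem (fun hj' => (hd hj).ne_of_mem hj' hi rfl) f
  · simp only [Set.mem_iUnion, not_exists] at hx
    simp [hx]

section ConvolutionKernel

variable {G : Type*} [MeasurableSpace G] {μ : Measure G}

theorem measurable_setIntegral_comp_sub [AddGroup G] [MeasurableSub₂ G] [SFinite μ]
    {f : G → ℝ} (hf : Measurable f) (E : Set G) :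
    Measurable fun x => ∫ y in E, f (x - y) ∂μ :=
  ((hf.comp measurable_sub).stronglyMeasurable.integral_prod_right'
    (ν := μ.restrict E)).measurable

theorem integral_mul_indicator_one {f : G → ℝ} {E : Set G} (hE : MeasurableSet E) :
    ∫ y, f y * E.indicator (fun _ => 1) y ∂μ = ∫ y in E, f y ∂μ := by
  simp_rw [← Set.indicator_mul_right, mul_one]
  exact integral_indicator hE

variable [AddCommGroup G] [MeasurableAdd₂ G] [MeasurableNeg G] [SFinite μ]
  [μ.IsAddLeftInvariant] [μ.IsNegInvariant]

theorem measurePreserving_prod_sub_left :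
    MeasurePreserving (fun q : G × G => (q.1, q.1 - q.2)) (μ.prod μ) (μ.prod μ) := by
  have := (measurePreserving_prod_add μ μ).comp
    ((MeasurePreserving.id μ).prod (Measure.measurePreserving_neg μ))
  simpa [Function.comp_def, sub_eq_add_neg, add_comm] using this

theorem integrable_comp_sub_mul_comp_sub {f g : G → ℝ} (hf : Integrable f μ)
    (hg : Integrable g μ) (x : G) :
    Integrable (fun q : G × G => f (x - q.1) * g (q.1 - q.2)) (μ.prod μ) := by
  have h := (hf.comp_sub_left x).mul_prod hg
  exact (measurePreserving_prod_sub_left.integrable_comp h.aestronglyMeasurable).mpr h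

theorem setIntegral_comp_sub_of_eq_conv {f g h : G → ℝ} (hf : Integrable f μ)
    (hg : Integrable g μ) (hconv : ∀ w, h w = ∫ y, f (w - y) * g y ∂μ) (x : G) (E : Set G) :
    ∫ z in E, h (x - z) ∂μ = ∫ y, f (x - y) * ∫ z in E, g (y - z) ∂μ ∂μ := by
  have hprod : Integrable (fun q : G × G => f (x - q.1) * g (q.1 - q.2))
      (μ.prod (μ.restrict E)) :=
    (integrable_comp_sub_mul_comp_sub hf hg x).mono_measure
      (Measure.prod_mono le_rfl Measure.restrict_le_self)
  calc ∫ z in E, h (x - z) ∂μ = ∫ z in E, ∫ y, f (x - y) * g (y - z) ∂μ ∂μ := by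
        congr 1 with z
        rw [hconv, ← integral_add_right_eq_self (fun y => f (x - y) * g (y - z)) z]
        simp only [add_sub_cancel_right, sub_add_eq_sub_sub_swap]
    _ = ∫ y, ∫ z in E, f (x - y) * g (y - z) ∂μ ∂μ := (integral_integral_swap hprod).symm
    _ = ∫ y, f (x - y) * ∫ z in E, g (y - z) ∂μ ∂μ := by simp only [integral_const_mul]

end ConvolutionKernel

/-- `p_t(x,E) = (Z_t * 1_E)(x)` (with `p_0(x,E) = 1_E(x)`) is a Markov transition function:
`p_t(x,·)` is a (probability) measure, `p_t(·,E)` is Borel measurable, `p_0(x,{x}) = 1`,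
and the Chapman–Kolmogorov equation holds for all `t, s ≥ 0`. -/
theorem transFn_isMarkovTransitionFunction
    (μ : Measure (Fin n → ℚ_[p])) [μ.IsAddHaarMeasure]
    (Z : ℝ → (Fin n → ℚ_[p]) → ℝ)
    (hpos : ∀ t : ℝ, 0 < t → ∀ x, 0 ≤ Z t x)
    (hcont : ∀ t : ℝ, 0 < t → Continuous (Z t))
    (hint : ∀ t : ℝ, 0 < t → Integrable (Z t) μ)
    (hone : ∀ t : ℝ, 0 < t → ∫ x, Z t x ∂μ = 1)
    (hCK : ∀ t s : ℝ, 0 < t → 0 < s → ∀ x : Fin n → ℚ_[p],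
      Z (t + s) x = ∫ y, Z t (x - y) * Z s y ∂μ) :
    -- (a) `p_t(x,·)` is a measure with total mass `1`
    (∀ t : ℝ, 0 ≤ t → ∀ x : Fin n → ℚ_[p],
      (∀ E : Set (Fin n → ℚ_[p]), 0 ≤ transFn μ Z t x E) ∧
      transFn μ Z t x Set.univ = 1 ∧
      (∀ E : ℕ → Set (Fin n → ℚ_[p]), (∀ i, MeasurableSet (E i)) →
        Pairwise (Function.onFun Disjoint E) →
        transFn μ Z t x (⋃ i, E i) = ∑' i, transFn μ Z t x (E i))) ∧
    -- (b) `p_t(·,E)` is Borel measurable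
    (∀ t : ℝ, 0 ≤ t → ∀ E : Set (Fin n → ℚ_[p]), MeasurableSet E →
      Measurable (fun x => transFn μ Z t x E)) ∧
    -- (c) `p_0(x,{x}) = 1`
    (∀ x : Fin n → ℚ_[p], transFn μ Z 0 x {x} = 1) ∧
    -- (d) Chapman–Kolmogorov: `p_{t+s}(x,E) = ∫ p_t(x,dy) p_s(y,E)`
    (∀ t s : ℝ, 0 ≤ t → 0 ≤ s → ∀ x : Fin n → ℚ_[p],
      ∀ E : Set (Fin n → ℚ_[p]), MeasurableSet E →
      transFn μ Z (t + s) x E =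
        if t = 0 then transFn μ Z s x E
        else ∫ y, Z t (x - y) * transFn μ Z s y E ∂μ) := by
  have transFn_zero : ∀ x E, transFn μ Z 0 x E = E.indicator (fun _ => 1) x :=
    fun _ _ => if_pos rfl
  have transFn_pos : ∀ t, 0 < t → ∀ x E, transFn μ Z t x E = ∫ y in E, Z t (x - y) ∂μ :=
    fun _ ht _ _ => if_neg ht.ne'
  refine ⟨fun t ht x => ?_, fun t ht E hE => ?_, fun x => by simp [transFn_zero],
    fun t s ht hs x E hE => ?_⟩
  · rcases ht.eq_or_lt with rfl | ht
    · simp only [transFn_zero]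
      exact ⟨fun E => Set.indicator_nonneg (fun _ _ => zero_le_one) x, by simp,
        fun E _ hd => Set.indicator_iUnion_apply_of_pairwise_disjoint hd _ x⟩
    · simp only [transFn_pos t ht]
      exact ⟨fun E => integral_nonneg fun y => hpos t ht _,
        by rw [Measure.restrict_univ, integral_sub_left_eq_self, hone t ht],
        fun E hE hd => integral_iUnion hE hd ((hint t ht).comp_sub_left x).integrableOn⟩
  · rcases ht.eq_or_lt with rfl | ht
    · simpa only [transFn_zero] using measurable_const.indicator hE
    · simpa only [transFn_pos t ht] using
        measurable_setIntegral_comp_sub (hcont t ht).measurable E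
  · rcases ht.eq_or_lt with rfl | ht
    · rw [if_pos rfl, zero_add]
    rw [if_neg ht.ne', transFn_pos _ (add_pos_of_pos_of_nonneg ht hs)]
    rcases hs.eq_or_lt with rfl | hs
    · simp only [transFn_zero, integral_mul_indicator_one hE, add_zero]
    · simp only [transFn_pos s hs]
      exact setIntegral_comp_sub_of_eq_conv (hint t ht) (hint s hs) (hCK t s ht hs) x E
end

section
/- The transition function p_t(x,E) = ∫_E Z_t(x-y) d^ny satisfies condition (L): for each s > 0 and each compact subset E ⊂ ℚ_p^n, sup_{0 ≤ t ≤ s} p_t(x, E) → 0 as ‖x‖_p → ∞. -/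
/-!
A point `y` of `E ⊆ closedBall 0 C` satisfies `‖x - y‖ ≥ ‖x‖ - C`, so the decay bound makes
`Z_t(x - y) ≤ A s (‖x‖ - C)^(-dβ-n)` uniformly in `y ∈ E` and `t ≤ s`. Since `Z_t ≥ 0` and `E`
has finite Haar measure, `p_t(x, E) ≤ A s (‖x‖ - C)^(-dβ-n) μ(E)`, which tends to `0`. At `t = 0`,
`p_0(x, E) = 1_E(x)` vanishes as soon as `‖x‖ > C`.
-/

open MeasureTheory

variable {p : ℕ} [Fact p.Prime] [MeasurableSpace ℚ_[p]] [BorelSpace ℚ_[p]] {n : ℕ}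

open Metric Filter Topology

theorem le_mul_rpow_of_le_norm {G : Type*} [NormedAddCommGroup G] {f : G → ℝ} {a e r : ℝ}
    (ha : 0 ≤ a) (he : e ≤ 0) (hf : ∀ z, z ≠ 0 → f z ≤ a * ‖z‖ ^ e) {z : G} (hr : 0 < r)
    (hz : r ≤ ‖z‖) : f z ≤ a * r ^ e := by
  have hz0 : z ≠ 0 := norm_pos_iff.1 (hr.trans_le hz)
  calc f z ≤ a * ‖z‖ ^ e := hf z hz0
    _ ≤ a * r ^ e := mul_le_mul_of_nonneg_left (Real.rpow_le_rpow_of_nonpos hr hz he) ha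

theorem setIntegral_le_mul_measureReal_of_nonneg_of_le {X : Type*} [MeasurableSpace X]
    {μ : Measure X} {s : Set X} {f : X → ℝ} {c : ℝ} (hs : μ s < ⊤) (hf0 : ∀ x ∈ s, 0 ≤ f x)
    (hfc : ∀ x ∈ s, f x ≤ c) : ∫ x in s, f x ∂μ ≤ c * μ.real s :=
  (le_abs_self _).trans <| norm_setIntegral_le_of_norm_le_const hs fun x hx => by
    rw [Real.norm_of_nonneg (hf0 x hx)]
    exact hfc x hx

theorem setIntegral_comp_sub_le_of_rpow_decay {G : Type*} [NormedAddCommGroup G]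
    [MeasurableSpace G] {μ : Measure G} {f : G → ℝ} {a e C : ℝ} {E : Set G} {x : G}
    (ha : 0 ≤ a) (he : e ≤ 0) (hf0 : ∀ z, 0 ≤ f z) (hf : ∀ z, z ≠ 0 → f z ≤ a * ‖z‖ ^ e)
    (hEμ : μ E < ⊤) (hEC : E ⊆ closedBall 0 C) (hx : C < ‖x‖) :
    ∫ y in E, f (x - y) ∂μ ≤ a * (‖x‖ - C) ^ e * μ.real E := by
  refine setIntegral_le_mul_measureReal_of_nonneg_of_le hEμ (fun y _ => hf0 _) fun y hy => ?_
  have hy : ‖y‖ ≤ C := mem_closedBall_zero_iff.1 (hEC hy)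
  exact le_mul_rpow_of_le_norm ha he hf (sub_pos.2 hx) (by linarith [norm_sub_norm_le x y])

theorem transFn_condition_L_general
    (μ : Measure (Fin n → ℚ_[p])) [μ.IsAddHaarMeasure]
    (Z : ℝ → (Fin n → ℚ_[p]) → ℝ)
    (hpos : ∀ t : ℝ, 0 < t → ∀ x, 0 ≤ Z t x)
    (A d β : ℝ) (hA : 0 < A) (hd : 0 < d) (hβ : 0 < β)
    (hdecay : ∀ t : ℝ, 0 < t → ∀ x : Fin n → ℚ_[p], x ≠ 0 →
      Z t x ≤ A * t * ‖x‖ ^ (-(d * β) - (n : ℝ)))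
    (s : ℝ)
    (E : Set (Fin n → ℚ_[p])) (hE : IsCompact E) :
    ∀ ε : ℝ, 0 < ε → ∃ R : ℝ, ∀ x : Fin n → ℚ_[p], R < ‖x‖ →
      ∀ t : ℝ, 0 ≤ t → t ≤ s → transFn μ Z t x E ≤ ε := by
  intro ε hε
  set e : ℝ := -(d * β) - n
  have he : e < 0 := by linarith [mul_pos hd hβ, n.cast_nonneg (α := ℝ)]
  obtain ⟨C, -, hEC⟩ := hE.isBounded.subset_closedBall_lt 0 0
  have hbound_tendsto : Tendsto (fun r : ℝ => A * s * r ^ e * μ.real E) atTop (𝓝 0) := by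
    have hpow : Tendsto (fun r : ℝ => r ^ e) atTop (𝓝 0) := by
      simpa using tendsto_rpow_neg_atTop (neg_pos.2 he)
    simpa using (hpow.const_mul (A * s)).mul_const (μ.real E)
  obtain ⟨R, hR⟩ := eventually_atTop.1 (hbound_tendsto.eventually_le_const hε)
  refine ⟨C + max R 0, fun x hx t ht hts => ?_⟩
  have hxC : C < ‖x‖ := by linarith [le_max_right R 0]
  rcases ht.eq_or_lt with rfl | htpos
  · have hxE : x ∉ E := fun hxE => hxC.not_ge (mem_closedBall_zero_iff.1 (hEC hxE))
    simpa [transFn, Set.indicator_of_notMem hxE] using hε.le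
  · rw [transFn, if_neg htpos.ne']
    calc ∫ y in E, Z t (x - y) ∂μ ≤ A * t * (‖x‖ - C) ^ e * μ.real E :=
          setIntegral_comp_sub_le_of_rpow_decay (by positivity) he.le (hpos t htpos)
            (hdecay t htpos) hE.measure_lt_top hEC hxC
      _ ≤ A * s * (‖x‖ - C) ^ e * μ.real E := by
          have := Real.rpow_nonneg (sub_pos.2 hxC).le e
          gcongr
      _ ≤ ε := hR _ (by linarith [le_max_left R 0])

/-- Condition (L): for each `s > 0` and each compact `E ⊂ ℚ_p^n`,
`sup_{0 ≤ t ≤ s} p_t(x,E) → 0` as `‖x‖_p → ∞`. -/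
theorem transFn_condition_L
    (μ : Measure (Fin n → ℚ_[p])) [μ.IsAddHaarMeasure]
    (Z : ℝ → (Fin n → ℚ_[p]) → ℝ)
    (hpos : ∀ t : ℝ, 0 < t → ∀ x, 0 ≤ Z t x)
    (hcont : ∀ t : ℝ, 0 < t → Continuous (Z t))
    (A d β : ℝ) (hA : 0 < A) (hd : 0 < d) (hβ : 0 < β)
    (hdecay : ∀ t : ℝ, 0 < t → ∀ x : Fin n → ℚ_[p], x ≠ 0 →
      Z t x ≤ A * t * ‖x‖ ^ (-(d * β) - (n : ℝ)))
    (s : ℝ) (hs : 0 < s)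
    (E : Set (Fin n → ℚ_[p])) (hE : IsCompact E) :
    ∀ ε : ℝ, 0 < ε → ∃ R : ℝ, ∀ x : Fin n → ℚ_[p], R < ‖x‖ →
      ∀ t : ℝ, 0 ≤ t → t ≤ s → transFn μ Z t x E ≤ ε :=
  transFn_condition_L_general μ Z hpos A d β hA hd hβ hdecay s E hE
end

section
/- The transition function p_t(x,E) = ∫_E Z_t(x-y) d^ny is uniformly stochastically continuous: for each r ∈ ℤ and each compact set E ⊂ ℚ_p^n, lim_{t→0⁺} sup_{x∈E} [1 − p_t(x, B_r^n(x))] = 0, where B_r^n(x) = {y : ‖y−x‖_p ≤ p^r}. -/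
open MeasureTheory
open scoped ENNReal

variable {p : ℕ} [Fact p.Prime] [MeasurableSpace ℚ_[p]] [BorelSpace ℚ_[p]] {n : ℕ}

set_option linter.unusedSectionVars false
set_option maxHeartbeats 1000000

section Aux
variable {p : ℕ} [Fact p.Prime]

lemma padic_digit_exists (m : ℤ) (q : ℚ_[p]) (hq : ‖q‖ ≤ (p:ℝ)^(m+1)) :
    ∃ a : ZMod p, ‖q - ((a.val : ℚ_[p]) * (p:ℚ_[p])^(-(m+1)))‖ ≤ (p:ℝ)^m := by
  have hp1 : (1:ℝ) < (p:ℝ) := by exact_mod_cast (Fact.out : p.Prime).one_lt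
  have hp0 : (0:ℝ) < (p:ℝ) := by linarith
  have hpq : (p:ℚ_[p]) ≠ 0 := by
    exact_mod_cast Nat.cast_ne_zero.mpr (Fact.out : p.Prime).ne_zero
  have hz : ‖q * (p:ℚ_[p])^(m+1)‖ ≤ 1 := by
    rw [norm_mul, Padic.norm_p_zpow]
    calc ‖q‖ * (p:ℝ)^(-(m+1)) ≤ (p:ℝ)^(m+1) * (p:ℝ)^(-(m+1)) :=
          mul_le_mul_of_nonneg_right hq (zpow_nonneg hp0.le _)
      _ = 1 := by rw [← zpow_add₀ (ne_of_gt hp0), show m+1+(-(m+1)) = 0 from by ring, zpow_zero]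
  set z : ℤ_[p] := ⟨q * (p:ℚ_[p])^(m+1), hz⟩ with hzdef
  refine ⟨PadicInt.toZMod z, ?_⟩
  have h1 : ‖z - (((PadicInt.toZMod z).val : ℕ) : ℤ_[p])‖ ≤ (p:ℝ)^(-(1:ℕ):ℤ) := by
    rw [PadicInt.norm_le_pow_iff_mem_span_pow, pow_one, ← PadicInt.maximalIdeal_eq_span_p]
    have h2 := PadicInt.toZMod_spec z
    rwa [← ZMod.natCast_val] at h2
  have hP : (p:ℚ_[p])^(m+1) * (p:ℚ_[p])^(-(m+1)) = 1 := by
    rw [← zpow_add₀ hpq, show m+1+(-(m+1)) = 0 from by ring, zpow_zero]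
  have key : q - ((PadicInt.toZMod z).val : ℚ_[p]) * (p:ℚ_[p])^(-(m+1))
      = ((z - (((PadicInt.toZMod z).val : ℕ) : ℤ_[p]) : ℤ_[p]) : ℚ_[p]) * (p:ℚ_[p])^(-(m+1)) := by
    rw [PadicInt.coe_sub, PadicInt.coe_natCast]
    have hzq : (z : ℚ_[p]) = q * (p:ℚ_[p])^(m+1) := rfl
    rw [hzq, sub_mul, mul_assoc, hP, mul_one]
  rw [key, norm_mul, Padic.norm_p_zpow]
  calc ‖((z - (((PadicInt.toZMod z).val : ℕ) : ℤ_[p]) : ℤ_[p]) : ℚ_[p])‖ * (p:ℝ)^(-(-(m+1)))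
      ≤ (p:ℝ)^(-(1:ℕ):ℤ) * (p:ℝ)^(m+1) := by
        rw [neg_neg]
        exact mul_le_mul_of_nonneg_right (by rw [← PadicInt.norm_def]; exact h1)
          (zpow_nonneg hp0.le _)
    _ = (p:ℝ)^m := by rw [← zpow_add₀ (ne_of_gt hp0)]; norm_num

lemma padic_digit_sep {a b : ZMod p} (hab : a ≠ b) (m : ℤ) :
    ‖((a.val : ℚ_[p]) * (p:ℚ_[p])^(-(m+1))) - ((b.val : ℚ_[p]) * (p:ℚ_[p])^(-(m+1)))‖
      = (p:ℝ)^(m+1) := by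
  have hp1 : (1:ℝ) < (p:ℝ) := by exact_mod_cast (Fact.out : p.Prime).one_lt
  have hnorm1 : ‖((((a.val:ℤ) - b.val : ℤ)) : ℚ_[p])‖ = 1 := by
    refine le_antisymm (Padic.norm_int_le_one _) ?_
    by_contra h
    push_neg at h
    rw [Padic.norm_intCast_lt_one_iff] at h
    have : ((((a.val:ℤ) - b.val : ℤ)) : ZMod p) = 0 :=
      (ZMod.intCast_zmod_eq_zero_iff_dvd _ _).mpr h
    push_cast at this
    rw [ZMod.natCast_val, ZMod.natCast_val, ZMod.cast_id, ZMod.cast_id, sub_eq_zero] at this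
    exact hab this
  rw [← sub_mul, norm_mul, Padic.norm_p_zpow]
  have : ((a.val : ℚ_[p]) - (b.val : ℚ_[p])) = ((((a.val:ℤ) - b.val : ℤ)) : ℚ_[p]) := by
    push_cast; ring
  rw [this, hnorm1, one_mul, neg_neg]

end Aux


lemma padic_ball_measurable (t : ℝ) :
    MeasurableSet {x : Fin n → ℚ_[p] | ‖x‖ ≤ t} :=
  isClosed_le (continuous_norm) continuous_const |>.measurableSet

lemma padic_ball_step (μ : Measure (Fin n → ℚ_[p])) [μ.IsAddHaarMeasure] (m : ℤ) :
    μ {x : Fin n → ℚ_[p] | ‖x‖ ≤ (p:ℝ)^(m+1)}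
      = (p:ℝ≥0∞)^n * μ {x : Fin n → ℚ_[p] | ‖x‖ ≤ (p:ℝ)^m} := by
  have hp1 : (1:ℝ) < (p:ℝ) := by exact_mod_cast (Fact.out : p.Prime).one_lt
  have hp0 : (0:ℝ) < (p:ℝ) := by linarith
  have hmono : (p:ℝ)^m ≤ (p:ℝ)^(m+1) := by
    apply zpow_le_zpow_right₀ hp1.le; omega
  set B : Set (Fin n → ℚ_[p]) := {x | ‖x‖ ≤ (p:ℝ)^m} with hBdef
  have hBmeas : MeasurableSet B := padic_ball_measurable _
  set c : ZMod p → ℚ_[p] := fun a => (a.val : ℚ_[p]) * (p:ℚ_[p])^(-(m+1)) with hcdef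
  set v : (Fin n → ZMod p) → (Fin n → ℚ_[p]) := fun σ i => c (σ i) with hvdef
  have hcnorm : ∀ a : ZMod p, ‖c a‖ ≤ (p:ℝ)^(m+1) := by
    intro a
    have h1 : ‖((a.val : ℕ) : ℚ_[p])‖ ≤ 1 := by
      have := Padic.norm_int_le_one (p := p) (a.val : ℤ)
      push_cast at this; exact this
    calc ‖c a‖ = ‖((a.val : ℕ) : ℚ_[p])‖ * (p:ℝ)^(m+1) := by
          rw [hcdef]; simp only [norm_mul, Padic.norm_p_zpow, neg_neg]
      _ ≤ 1 * (p:ℝ)^(m+1) := mul_le_mul_of_nonneg_right h1 (zpow_nonneg hp0.le _)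
      _ = (p:ℝ)^(m+1) := one_mul _
  have hcover : {x : Fin n → ℚ_[p] | ‖x‖ ≤ (p:ℝ)^(m+1)}
      = ⋃ σ : Fin n → ZMod p, (fun x => x - v σ) ⁻¹' B := by
    ext x
    simp only [Set.mem_setOf_eq, Set.mem_iUnion, Set.mem_preimage, hBdef]
    constructor
    · intro hx
      have hxi : ∀ i, ∃ a : ZMod p, ‖x i - c a‖ ≤ (p:ℝ)^m := fun i =>
        padic_digit_exists m (x i) ((norm_le_pi_norm x i).trans hx)
      choose σ hσ using hxi
      exact ⟨σ, (pi_norm_le_iff_of_nonneg (zpow_nonneg hp0.le _)).mpr fun i => by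
        simpa using hσ i⟩
    · rintro ⟨σ, hσ⟩
      rw [show x = (x - v σ) + v σ by ring]
      refine (pi_norm_le_iff_of_nonneg (zpow_nonneg hp0.le _)).mpr fun i => ?_
      calc ‖((x - v σ) + v σ) i‖ = ‖(x - v σ) i + v σ i‖ := rfl
        _ ≤ max ‖(x - v σ) i‖ ‖v σ i‖ := Padic.nonarchimedean _ _
        _ ≤ (p:ℝ)^(m+1) := max_le
            (((norm_le_pi_norm _ i).trans hσ).trans hmono) (hcnorm (σ i))
  have hdisj : Pairwise (Function.onFun Disjoint
      fun σ : Fin n → ZMod p => (fun x => x - v σ) ⁻¹' B) := by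
    intro σ τ hne
    rw [Function.onFun, Set.disjoint_left]
    intro x hxσ hxτ
    obtain ⟨i, hi⟩ := Function.ne_iff.mp hne
    have h1 : ‖x i - c (σ i)‖ ≤ (p:ℝ)^m := (norm_le_pi_norm (x - v σ) i).trans hxσ
    have h2 : ‖x i - c (τ i)‖ ≤ (p:ℝ)^m := (norm_le_pi_norm (x - v τ) i).trans hxτ
    have h3 : ‖c (σ i) - c (τ i)‖ ≤ (p:ℝ)^m := by
      have : c (σ i) - c (τ i) = (x i - c (τ i)) - (x i - c (σ i)) := by ring
      rw [this, sub_eq_add_neg]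
      refine (Padic.nonarchimedean _ _).trans (max_le h2 ?_)
      rwa [norm_neg]
    rw [padic_digit_sep hi m] at h3
    exact absurd h3 (not_le.mpr (zpow_lt_zpow_right₀ hp1 (lt_add_one m)))
  have hmeaspre : ∀ σ : Fin n → ZMod p,
      MeasurableSet ((fun x : Fin n → ℚ_[p] => x - v σ) ⁻¹' B) := fun σ =>
    (measurable_id.sub measurable_const) hBmeas
  have htrans : ∀ σ : Fin n → ZMod p, μ ((fun x => x - v σ) ⁻¹' B) = μ B := by
    intro σ
    have : (fun x : Fin n → ℚ_[p] => x - v σ) = fun x => x + (-(v σ)) := by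
      funext x; ring
    rw [this, measure_preimage_add_right]
  rw [hcover, measure_iUnion hdisj hmeaspre]
  simp only [htrans]
  rw [tsum_fintype]
  rw [Finset.sum_const, Finset.card_univ]
  have hcard : Fintype.card (Fin n → ZMod p) = p ^ n := by
    rw [Fintype.card_fun, ZMod.card, Fintype.card_fin]
  rw [hcard, nsmul_eq_mul]
  push_cast
  ring


lemma padic_ball_iter (μ : Measure (Fin n → ℚ_[p])) [μ.IsAddHaarMeasure] (r : ℤ) (k : ℕ) :
    μ {x : Fin n → ℚ_[p] | ‖x‖ ≤ (p:ℝ)^(r + (k:ℤ))}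
      = ((p:ℝ≥0∞)^n)^k * μ {x : Fin n → ℚ_[p] | ‖x‖ ≤ (p:ℝ)^r} := by
  induction k with
  | zero => simp
  | succ k ih =>
    have : r + ((k+1 : ℕ):ℤ) = (r + (k:ℤ)) + 1 := by push_cast; ring
    rw [this, padic_ball_step μ (r + (k:ℤ)), ih, pow_succ]
    ring

lemma padic_ball_lt_top (μ : Measure (Fin n → ℚ_[p])) [μ.IsAddHaarMeasure] (r : ℤ) :
    μ {x : Fin n → ℚ_[p] | ‖x‖ ≤ (p:ℝ)^r} < ⊤ := by
  have : {x : Fin n → ℚ_[p] | ‖x‖ ≤ (p:ℝ)^r} = Metric.closedBall 0 ((p:ℝ)^r) := by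
    ext x; simp [Metric.mem_closedBall, dist_zero_right]
  rw [this]
  exact (isCompact_closedBall 0 _).measure_lt_top

lemma padic_tail_lintegral_lt_top (μ : Measure (Fin n → ℚ_[p])) [μ.IsAddHaarMeasure]
    (r : ℤ) (s : ℝ) (hs : (n:ℝ) < s) :
    ∫⁻ w in {x : Fin n → ℚ_[p] | ‖x‖ ≤ (p:ℝ)^r}ᶜ, ENNReal.ofReal (‖w‖ ^ (-s)) ∂μ < ⊤ := by
  have hp1 : (1:ℝ) < (p:ℝ) := by exact_mod_cast (Fact.out : p.Prime).one_lt
  have hp0 : (0:ℝ) < (p:ℝ) := by linarith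
  set P : ℝ := (p:ℝ)
  set K : ℝ := P ^ ((n:ℝ) - (r:ℝ)*s) with hKdef
  set ρ : ℝ := P ^ ((n:ℝ) - s) with hρdef
  have hρ0 : 0 ≤ ρ := Real.rpow_nonneg hp0.le _
  have hρ1 : ρ < 1 := Real.rpow_lt_one_of_one_lt_of_neg hp1 (by linarith)
  set D : ℕ → Set (Fin n → ℚ_[p]) := fun j =>
    {x | ‖x‖ ≤ P^(r+1+(j:ℤ))} \ {x | ‖x‖ ≤ P^(r+(j:ℤ))} with hDdef
  -- the tail is covered by the shells
  have hcover : {x : Fin n → ℚ_[p] | ‖x‖ ≤ P^r}ᶜ ⊆ ⋃ j, D j := by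
    intro x hx
    simp only [Set.mem_compl_iff, Set.mem_setOf_eq, not_le] at hx
    have hbound : ∃ k : ℕ, ‖x‖ ≤ P^(r+(k:ℤ)) := by
      obtain ⟨k, hk⟩ := pow_unbounded_of_one_lt (‖x‖ / P^r) hp1
      refine ⟨k, ?_⟩
      rw [div_lt_iff₀ (zpow_pos hp0 r)] at hk
      have : P^(r+(k:ℤ)) = P^(k:ℕ) * P^r := by
        rw [zpow_add₀ (ne_of_gt hp0), zpow_natCast]; ring
      rw [this]; exact hk.le
    classical
    let k₀ := Nat.find hbound
    have hk₀ : ‖x‖ ≤ P^(r+(k₀:ℤ)) := Nat.find_spec hbound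
    have hk₀pos : k₀ ≠ 0 := by
      intro h0
      rw [h0] at hk₀
      simp only [Nat.cast_zero, add_zero] at hk₀
      exact absurd hk₀ (not_le.mpr hx)
    refine Set.mem_iUnion.mpr ⟨k₀ - 1, ?_⟩
    constructor
    · simp only [Set.mem_setOf_eq]
      have : r + 1 + ((k₀-1:ℕ):ℤ) = r + (k₀:ℤ) := by
        have := Nat.succ_pred_eq_of_pos (Nat.pos_of_ne_zero hk₀pos)
        push_cast [Nat.cast_sub (Nat.one_le_iff_ne_zero.mpr hk₀pos)]
        ring
      rw [this]; exact hk₀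
    · simp only [Set.mem_setOf_eq, not_le]
      have hlt := Nat.find_min hbound (m := k₀ - 1) (Nat.sub_lt (Nat.pos_of_ne_zero hk₀pos) one_pos)
      push_neg at hlt
      exact hlt
  have hshell : ∀ j : ℕ, ∫⁻ w in D j, ENNReal.ofReal (‖w‖ ^ (-s)) ∂μ
      ≤ ENNReal.ofReal (K * ρ^j) * μ {x : Fin n → ℚ_[p] | ‖x‖ ≤ P^r} := by
    intro j
    have hstep1 : ∫⁻ w in D j, ENNReal.ofReal (‖w‖ ^ (-s)) ∂μ
        ≤ ENNReal.ofReal ((P^(r+(j:ℤ))) ^ (-s)) * μ (D j) := by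
      rw [← setLIntegral_const (D j) _]
      refine setLIntegral_mono' (padic_ball_measurable _ |>.diff (padic_ball_measurable _)) ?_
      intro w hw
      have hw2 : P^(r+(j:ℤ)) < ‖w‖ := by
        have := hw.2; simp only [Set.mem_setOf_eq, not_le] at this; exact this
      exact ENNReal.ofReal_le_ofReal
        (Real.rpow_le_rpow_of_nonpos (zpow_pos hp0 _) hw2.le (by linarith))
    have hmeas : μ (D j) ≤ ((p:ℝ≥0∞)^n)^(j+1) * μ {x : Fin n → ℚ_[p] | ‖x‖ ≤ P^r} := by
      have h1 : μ (D j) ≤ μ {x : Fin n → ℚ_[p] | ‖x‖ ≤ P^(r+1+(j:ℤ))} :=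
        measure_mono Set.diff_subset
      have h2 : r + 1 + (j:ℤ) = r + ((j+1:ℕ):ℤ) := by push_cast; ring
      rw [h2] at h1
      rw [padic_ball_iter μ r (j+1)] at h1
      exact h1
    calc ∫⁻ w in D j, ENNReal.ofReal (‖w‖ ^ (-s)) ∂μ
        ≤ ENNReal.ofReal ((P^(r+(j:ℤ))) ^ (-s)) * (((p:ℝ≥0∞)^n)^(j+1)
            * μ {x : Fin n → ℚ_[p] | ‖x‖ ≤ P^r}) :=
          hstep1.trans (mul_le_mul_right hmeas _)
      _ = ENNReal.ofReal (K * ρ^j) * μ {x : Fin n → ℚ_[p] | ‖x‖ ≤ P^r} := by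
          rw [← mul_assoc]
          congr 1
          have hpow : ((p:ℝ≥0∞)^n)^(j+1) = ENNReal.ofReal (P^(n*(j+1) : ℕ)) := by
            rw [← pow_mul, ← ENNReal.ofReal_natCast p, ← ENNReal.ofReal_pow hp0.le]
          have hreal : (P^(r+(j:ℤ))) ^ (-s) * P^(n*(j+1) : ℕ) = K * ρ^j := by
            rw [hKdef, hρdef, ← Real.rpow_natCast (P ^ ((n:ℝ) - s)) j, ← Real.rpow_mul hp0.le,
                ← Real.rpow_intCast P (r+(j:ℤ)), ← Real.rpow_mul hp0.le,
                ← Real.rpow_natCast P (n*(j+1)), ← Real.rpow_add hp0, ← Real.rpow_add hp0]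
            congr 1
            push_cast
            ring
          rw [hpow, ← ENNReal.ofReal_mul (Real.rpow_nonneg (zpow_nonneg hp0.le _) _), hreal]
  have hK0 : 0 ≤ K := Real.rpow_nonneg hp0.le _
  calc ∫⁻ w in {x : Fin n → ℚ_[p] | ‖x‖ ≤ (p:ℝ)^r}ᶜ, ENNReal.ofReal (‖w‖ ^ (-s)) ∂μ
      ≤ ∫⁻ w in ⋃ j, D j, ENNReal.ofReal (‖w‖ ^ (-s)) ∂μ := lintegral_mono_set hcover
    _ ≤ ∑' j : ℕ, ∫⁻ w in D j, ENNReal.ofReal (‖w‖ ^ (-s)) ∂μ := lintegral_iUnion_le _ _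
    _ ≤ ∑' j : ℕ, ENNReal.ofReal (K * ρ^j) * μ {x : Fin n → ℚ_[p] | ‖x‖ ≤ P^r} :=
        ENNReal.tsum_le_tsum hshell
    _ = (∑' j : ℕ, ENNReal.ofReal (K * ρ^j)) * μ {x : Fin n → ℚ_[p] | ‖x‖ ≤ P^r} :=
        ENNReal.tsum_mul_right
    _ = ENNReal.ofReal (∑' j : ℕ, K * ρ^j) * μ {x : Fin n → ℚ_[p] | ‖x‖ ≤ P^r} := by
        rw [ENNReal.ofReal_tsum_of_nonneg (fun j => mul_nonneg hK0 (pow_nonneg hρ0 j))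
          ((summable_geometric_of_lt_one hρ0 hρ1).mul_left K)]
    _ < ⊤ := ENNReal.mul_lt_top ENNReal.ofReal_lt_top (padic_ball_lt_top μ r)

lemma padic_tail_integrableOn (μ : Measure (Fin n → ℚ_[p])) [μ.IsAddHaarMeasure]
    (r : ℤ) (s : ℝ) (hs : (n:ℝ) < s) :
    IntegrableOn (fun w : Fin n → ℚ_[p] => ‖w‖ ^ (-s)) {x : Fin n → ℚ_[p] | ‖x‖ ≤ (p:ℝ)^r}ᶜ μ := by
  constructor
  · have hco : ContinuousOn (fun w : Fin n → ℚ_[p] => ‖w‖ ^ (-s))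
        {x : Fin n → ℚ_[p] | ‖x‖ ≤ (p:ℝ)^r}ᶜ := by
      intro w hw
      have hp0 : (0:ℝ) < (p:ℝ) := by exact_mod_cast (Fact.out : p.Prime).pos
      have hne : ‖w‖ ≠ 0 := by
        simp only [Set.mem_compl_iff, Set.mem_setOf_eq, not_le] at hw
        exact ne_of_gt (lt_trans (zpow_pos hp0 r) hw)
      exact ((Real.continuousAt_rpow_const _ _ (Or.inl hne)).comp
        continuous_norm.continuousAt).continuousWithinAt
    exact (hco.aemeasurable (padic_ball_measurable _).compl).aestronglyMeasurable
  · rw [hasFiniteIntegral_iff_ofReal (ae_of_all _ fun w => Real.rpow_nonneg (norm_nonneg _) _)]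
    exact padic_tail_lintegral_lt_top μ r s hs

/-- Uniform stochastic continuity: for each `r ∈ ℤ` and each compact `E ⊂ ℚ_p^n`,
`lim_{t→0⁺} sup_{x∈E} (1 − p_t(x, B_r^n(x))) = 0`. -/
theorem transFn_uniformly_stochastically_continuous
    (μ : Measure (Fin n → ℚ_[p])) [μ.IsAddHaarMeasure]
    (Z : ℝ → (Fin n → ℚ_[p]) → ℝ)
    (hpos : ∀ t : ℝ, 0 < t → ∀ x, 0 ≤ Z t x)
    (hcont : ∀ t : ℝ, 0 < t → Continuous (Z t))
    (hint : ∀ t : ℝ, 0 < t → Integrable (Z t) μ)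
    (hone : ∀ t : ℝ, 0 < t → ∫ x, Z t x ∂μ = 1)
    (A d β : ℝ) (hA : 0 < A) (hd : 0 < d) (hβ : 0 < β)
    (hdecay : ∀ t : ℝ, 0 < t → ∀ x : Fin n → ℚ_[p], x ≠ 0 →
      Z t x ≤ A * t * ‖x‖ ^ (-(d * β) - (n : ℝ)))
    (r : ℤ) (E : Set (Fin n → ℚ_[p])) (hE : IsCompact E) :
    ∀ ε : ℝ, 0 < ε → ∃ δ : ℝ, 0 < δ ∧ ∀ t : ℝ, 0 < t → t < δ →
      ∀ x ∈ E, 1 - transFn μ Z t x {y | ‖y - x‖ ≤ (p : ℝ) ^ r} ≤ ε := by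
  intro ε hε
  have hp1 : (1:ℝ) < (p:ℝ) := by exact_mod_cast (Fact.out : p.Prime).one_lt
  have hp0 : (0:ℝ) < (p:ℝ) := by linarith
  set s : ℝ := d*β + n with hsdef
  have hs : (n:ℝ) < s := by have := mul_pos hd hβ; rw [hsdef]; linarith
  set B : Set (Fin n → ℚ_[p]) := {x | ‖x‖ ≤ (p:ℝ)^r} with hBdef
  have hBmeas : MeasurableSet B := padic_ball_measurable ((p:ℝ)^r)
  set g : (Fin n → ℚ_[p]) → ℝ := fun w => ‖w‖ ^ (-s) with hgdef
  have hgint : IntegrableOn g Bᶜ μ := padic_tail_integrableOn μ r s hs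
  set C : ℝ := ∫ w in Bᶜ, g w ∂μ with hCdef
  have hC0 : 0 ≤ C :=
    setIntegral_nonneg hBmeas.compl (fun w _ => Real.rpow_nonneg (norm_nonneg _) _)
  refine ⟨ε / (A * (C+1)), div_pos hε (by positivity), ?_⟩
  intro t ht htδ x hx
  rw [transFn, if_neg (ne_of_gt ht)]
  have hSmeas : MeasurableSet {y : Fin n → ℚ_[p] | ‖y - x‖ ≤ (p:ℝ)^r} :=
    (isClosed_le (continuous_norm.comp (continuous_id.sub continuous_const))
      continuous_const).measurableSet
  have htrans : ∫ y in {y | ‖y - x‖ ≤ (p:ℝ)^r}, Z t (x - y) ∂μ = ∫ w in B, Z t w ∂μ := by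
    rw [← integral_indicator hSmeas]
    have heq : (fun y => Set.indicator {y | ‖y - x‖ ≤ (p:ℝ)^r} (fun y => Z t (x - y)) y)
        = fun y => Set.indicator B (Z t) (x - y) := by
      funext y
      by_cases h : y ∈ {y : Fin n → ℚ_[p] | ‖y - x‖ ≤ (p:ℝ)^r}
      · rw [Set.indicator_of_mem h, Set.indicator_of_mem
          (by simpa [hBdef, norm_sub_rev] using h)]
      · rw [Set.indicator_of_notMem h, Set.indicator_of_notMem
          (by simpa [hBdef, norm_sub_rev] using h)]
    rw [heq, integral_sub_left_eq_self (Set.indicator B (Z t)) μ x, integral_indicator hBmeas]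
  rw [htrans]
  have hsplit : ∫ w in B, Z t w ∂μ + ∫ w in Bᶜ, Z t w ∂μ = 1 := by
    rw [integral_add_compl hBmeas (hint t ht), hone t ht]
  have hbound : ∫ w in Bᶜ, Z t w ∂μ ≤ A * t * C := by
    have h1 : ∫ w in Bᶜ, Z t w ∂μ ≤ ∫ w in Bᶜ, A * t * g w ∂μ := by
      refine setIntegral_mono_on ((hint t ht).integrableOn) (hgint.const_mul (A*t))
        hBmeas.compl ?_
      intro w hw
      have hw0 : w ≠ 0 := by
        rintro rfl
        exact hw (by simp only [hBdef, Set.mem_setOf_eq, norm_zero]; positivity)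
      have hexp : -(d*β) - (n:ℝ) = -s := by rw [hsdef]; ring
      have h2 := hdecay t ht w hw0
      rwa [hexp] at h2
    have h2 : ∫ w in Bᶜ, A * t * g w ∂μ = A * t * C := by
      rw [hCdef, ← integral_const_mul]
    linarith [h1, h2.le, h2.ge]
  have hq : 0 < A * (C+1) := by positivity
  have h3 : t * (A * (C+1)) < ε := (lt_div_iff₀ hq).mp htδ
  nlinarith [mul_pos hA ht, hsplit, hbound]
end
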